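/- arXiv:1911.03220 — 7 statements merged into one kernel-verified Lean document; each statement's English description precedes it below -/
import Mathlib

section
/- Let λ be a partition of n with d = dim_F M^λ > 1, where M^λ is the Young permutation module over a field F of characteristic p > 0. Define f^λ to be the number of λ-tabloids not fixed by the transposition (1,2), i.e., f^λ = d − Σ_{i : λ_i ≥ 2} (n−2)!/((λ_i − 2)! · Π_{j ≠ i} λ_j!) when some part is at least 2, and f^λ = d when λ = (1^n). Then the top exterior power Λ^d M^λ is isomorphic to the trivial module F if p = 2, or if p > 2 and 4 divides f^λ; otherwise Λ^d M^λ is isomorphic to the sign module sgn. -/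
/-- A `λ`-tabloid: a function `f : {1,…,n} → {rows}` whose fibre over the row `i` has
cardinality `λ_i`. -/
def Tabloid (n ℓ : ℕ) (lam : Fin ℓ → ℕ) : Type :=
  {f : Fin n → Fin ℓ // ∀ i, (Finset.univ.filter (fun x => f x = i)).card = lam i}

/-- The symmetric group `S_n` acts on `λ`-tabloids by permuting entries. -/
noncomputable instance tabloidAction (n ℓ : ℕ) (lam : Fin ℓ → ℕ) :
    MulAction (Equiv.Perm (Fin n)) (Tabloid n ℓ lam) where
  smul g t := ⟨fun x => t.1 (g⁻¹ x), fun i => by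
    rw [← t.2 i]
    refine Finset.card_bij' (fun x _ => g⁻¹ x) (fun x _ => g x) ?_ ?_ ?_ ?_ <;> simp⟩
  one_smul t := Subtype.ext <| funext fun x => congrArg t.1 (by simp)
  mul_smul g h t := Subtype.ext <| funext fun x => congrArg t.1 (by simp [mul_inv_rev, Equiv.Perm.mul_apply])

/-- The representation of `G` on the exterior algebra of `M` induced by a
representation of `G` on `M`; it restricts to the diagonal action on each `⋀[F]^a M`. -/
noncomputable def extAlgRep {F G M : Type*} [Field F] [Group G] [AddCommGroup M] [Module F M]
    (ρ : Representation F G M) : Representation F G (ExteriorAlgebra F M) where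
  toFun g := (ExteriorAlgebra.map (ρ g)).toLinearMap
  map_one' := by
    show (ExteriorAlgebra.map (ρ 1)).toLinearMap = _
    have h1 : ρ 1 = LinearMap.id := by rw [map_one]; rfl
    rw [h1, ExteriorAlgebra.map_id]; rfl
  map_mul' g h := by
    show (ExteriorAlgebra.map (ρ (g * h))).toLinearMap = _
    have h1 : ρ (g * h) = (ρ g) ∘ₗ (ρ h) := by rw [map_mul]; rfl
    rw [h1, ← ExteriorAlgebra.map_comp_map]; rfl

/-- The permutation representation of `G` on `H →₀ k` (the pre-2025 `Representation.ofMulAction`,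
whose carrier is now the structure `MonoidAlgebra k H`). -/
noncomputable def ofMulActionFinsupp (k G H : Type*) [CommSemiring k] [Monoid G] [MulAction G H] :
    Representation k G (H →₀ k) where
  toFun g := Finsupp.lmapDomain k k (g • ·)
  map_one' := by ext; simp
  map_mul' x y := by ext; simp [mul_smul]


instance instTabloidFinite (n ℓ : ℕ) (lam : Fin ℓ → ℕ) : Finite (Tabloid n ℓ lam) :=
  Subtype.finite

noncomputable instance instTabloidFintype (n ℓ : ℕ) (lam : Fin ℓ → ℕ) :
    Fintype (Tabloid n ℓ lam) := Fintype.ofFinite _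

noncomputable instance instTabloidDecEq (n ℓ : ℕ) (lam : Fin ℓ → ℕ) :
    DecidableEq (Tabloid n ℓ lam) := Classical.decEq _

/-- Sign of an involution: its support has even cardinality `2k` and its sign is `(-1)^k`. -/
lemma invol_sign_aux {α : Type*} [Fintype α] [DecidableEq α] (N : ℕ) :
    ∀ (σ : Equiv.Perm α), σ.support.card ≤ N → σ * σ = 1 →
      ∃ k, σ.support.card = 2 * k ∧ Equiv.Perm.sign σ = (-1) ^ k := by
  induction N with
  | zero =>
    intro σ h _
    have hσ : σ = 1 := by
      rw [← Equiv.Perm.support_eq_empty_iff, ← Finset.card_eq_zero]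
      omega
    exact ⟨0, by simp [hσ], by simp [hσ]⟩
  | succ N ih =>
    intro σ hcard hinv
    have hσσ : ∀ z, σ (σ z) = z := fun z => by
      have := DFunLike.congr_fun hinv z
      simpa [Equiv.Perm.mul_apply] using this
    by_cases h1 : σ = 1
    · exact ⟨0, by simp [h1], by simp [h1]⟩
    · obtain ⟨x, hx⟩ : ∃ x, σ x ≠ x := by
        by_contra h
        push_neg at h
        exact h1 (Equiv.ext h)
      obtain ⟨y, hy⟩ : ∃ y, σ x = y := ⟨σ x, rfl⟩
      have hyx : σ y = x := by rw [← hy, hσσ]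
      have hxy : x ≠ y := by rw [← hy]; exact fun h => hx h.symm
      set σ' : Equiv.Perm α := Equiv.swap x y * σ with hσ'
      have happ : ∀ z, σ' z = Equiv.swap x y (σ z) := fun z => rfl
      have hσeq : σ = Equiv.swap x y * σ' := by
        rw [hσ', ← mul_assoc, Equiv.swap_mul_self, one_mul]
      have hne1 : ∀ z : α, z ≠ x → z ≠ y → σ z ≠ x := fun z _ hzy hc =>
        hzy (σ.injective (by rw [hc, hyx]))
      have hne2 : ∀ z : α, z ≠ x → z ≠ y → σ z ≠ y := fun z hzx _ hc =>
        hzx (σ.injective (by rw [hc, hy]))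
      have hsupp : σ'.support = σ.support \ {x, y} := by
        ext z
        simp only [Equiv.Perm.mem_support, Finset.mem_sdiff, Finset.mem_insert,
          Finset.mem_singleton, happ, not_or]
        constructor
        · intro h
          rcases eq_or_ne z x with rfl | hzx
          · rw [hy, Equiv.swap_apply_right] at h; exact absurd rfl h
          rcases eq_or_ne z y with rfl | hzy
          · rw [hyx, Equiv.swap_apply_left] at h; exact absurd rfl h
          rw [Equiv.swap_apply_of_ne_of_ne (hne1 z hzx hzy) (hne2 z hzx hzy)] at h
          exact ⟨h, hzx, hzy⟩
        · rintro ⟨h, hzx, hzy⟩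
          rw [Equiv.swap_apply_of_ne_of_ne (hne1 z hzx hzy) (hne2 z hzx hzy)]
          exact h
      have hxmem : x ∈ σ.support := Equiv.Perm.mem_support.mpr hx
      have hymem : y ∈ σ.support := Equiv.Perm.mem_support.mpr (by rw [hyx]; exact hxy)
      have hsub : ({x, y} : Finset α) ⊆ σ.support := by
        intro z hz
        simp only [Finset.mem_insert, Finset.mem_singleton] at hz
        rcases hz with rfl | rfl <;> assumption
      have hcard2 : ({x, y} : Finset α).card = 2 := Finset.card_pair hxy
      have hcard' : σ'.support.card = σ.support.card - 2 := by
        rw [hsupp, Finset.card_sdiff_of_subset hsub, hcard2]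
      have hge : 2 ≤ σ.support.card := by
        calc 2 = ({x, y} : Finset α).card := hcard2.symm
        _ ≤ _ := Finset.card_le_card hsub
      have hinv' : σ' * σ' = 1 := by
        ext z
        simp only [Equiv.Perm.mul_apply, Equiv.Perm.one_apply, happ]
        rcases eq_or_ne (σ z) x with hc | hc1
        · have hz : z = y := σ.injective (by rw [hc, hyx])
          subst hz
          rw [hyx, Equiv.swap_apply_left, hyx, Equiv.swap_apply_left]
        rcases eq_or_ne (σ z) y with hc | hc2
        · have hz : z = x := σ.injective (by rw [hc, hy])
          subst hz
          rw [hy, Equiv.swap_apply_right, hy, Equiv.swap_apply_right]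
        · rw [Equiv.swap_apply_of_ne_of_ne hc1 hc2, hσσ z]
          have hzx : z ≠ x := fun h => by subst h; exact hc2 hy
          have hzy : z ≠ y := fun h => by subst h; exact hc1 hyx
          exact Equiv.swap_apply_of_ne_of_ne hzx hzy
      obtain ⟨k, hk, hsk⟩ := ih σ' (by omega) hinv'
      refine ⟨k + 1, by omega, ?_⟩
      rw [hσeq, map_mul, Equiv.Perm.sign_swap hxy, hsk, pow_succ, mul_comm]

/-- A homomorphism from `S_n` (n ≥ 2) to `ℤˣ` killing the transposition `(0 1)` is trivial. -/
lemma hom_eq_one_aux {n : ℕ} (hn : 2 ≤ n) (η : Equiv.Perm (Fin n) →* ℤˣ)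
    (hτ : η (Equiv.swap (⟨0, by omega⟩ : Fin n) (⟨1, by omega⟩ : Fin n)) = 1) :
    ∀ g, η g = 1 := by
  have h01 : (⟨0, by omega⟩ : Fin n) ≠ (⟨1, by omega⟩ : Fin n) := by
    simp [Fin.ext_iff]
  have hswap : ∀ x y : Fin n, x ≠ y → η (Equiv.swap x y) = 1 := by
    intro x y hxy
    obtain ⟨c, hc⟩ := isConj_iff.mp (Equiv.Perm.isConj_swap h01 hxy)
    rw [← hc, map_mul, map_mul, map_inv, hτ, mul_one, mul_inv_cancel]
  intro g
  refine Equiv.Perm.swap_induction_on g (map_one η) ?_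
  intro f x y hxy ih
  rw [map_mul, hswap _ _ hxy, ih, one_mul]

/-- On the top exterior power, the permutation representation acts by the sign of the
induced permutation of the basis. -/
lemma key_lemma {F X G : Type*} [Field F] [Group G] [Fintype X] [DecidableEq X]
    [MulAction G X] {d : ℕ} (hd : d = Nat.card X) (g : G)
    (x : ExteriorAlgebra F (X →₀ F)) (hx : x ∈ ⋀[F]^d (X →₀ F)) :
    extAlgRep (ofMulActionFinsupp F G X) g x =
      ((Equiv.Perm.sign (MulAction.toPermHom G X g) : ℤ) : F) • x := by
  classical
  set ρ := ofMulActionFinsupp F G X with hρ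
  set b : Module.Basis X F (X →₀ F) := Finsupp.basisSingleOne with hb
  set c : ℤˣ := Equiv.Perm.sign (MulAction.toPermHom G X g) with hc
  have hcard : Fintype.card X = d := by rw [hd, Nat.card_eq_fintype_card]
  have hAB : (ExteriorAlgebra.ιMulti F d (M := X →₀ F)).compLinearMap (ρ g)
      = ((c : ℤ) : F) • ExteriorAlgebra.ιMulti F d := by
    refine Module.Basis.ext_alternating b ?_
    intro v hv
    have hvbij : Function.Bijective v :=
      (Fintype.bijective_iff_injective_and_card v).mpr ⟨hv, by simp [hcard]⟩
    set e : Fin d ≃ X := Equiv.ofBijective v hvbij with he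
    set π : Equiv.Perm (Fin d) := Equiv.permCongr e.symm (MulAction.toPermHom G X g) with hπ
    have hπs : Equiv.Perm.sign π = c := by
      rw [hπ, Equiv.Perm.sign_permCongr, hc]
    have hval : (fun i => ρ g (b (v i))) = (fun i => b (v i)) ∘ π := by
      funext i
      have h1 : ρ g (b (v i)) = b (g • v i) := by
        simp [hρ, hb, Finsupp.coe_basisSingleOne, ofMulActionFinsupp, Finsupp.mapDomain_single]
      have h2 : v (π i) = g • v i := by
        show e (π i) = g • v i
        rw [hπ]
        simp only [Equiv.permCongr_apply, Equiv.symm_symm, Equiv.apply_symm_apply,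
          MulAction.toPermHom_apply, MulAction.toPerm_apply]
        rfl
      simp only [Function.comp_apply, h1, h2]
    rw [AlternatingMap.compLinearMap_apply]
    change (ExteriorAlgebra.ιMulti F d) (fun i => ρ g (b (v i))) = _
    rw [hval, AlternatingMap.map_perm, hπs, AlternatingMap.smul_apply]
    rw [Units.smul_def, ← Int.cast_smul_eq_zsmul F]
  have hmap : ∀ y ∈ ⋀[F]^d (X →₀ F),
      ExteriorAlgebra.map (ρ g) y = ((c : ℤ) : F) • y := by
    intro y hy
    rw [← ExteriorAlgebra.ιMulti_span_fixedDegree] at hy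
    induction hy using Submodule.span_induction with
    | mem z hz =>
      obtain ⟨v, rfl⟩ := hz
      rw [ExteriorAlgebra.map_apply_ιMulti]
      have := congrFun (congrArg DFunLike.coe hAB) v
      simp only [AlternatingMap.compLinearMap_apply, AlternatingMap.smul_apply] at this
      convert this using 2
      rfl
    | zero => simp
    | add z w _ _ hz hw => rw [map_add, hz, hw, smul_add]
    | smul a z _ hz => rw [map_smul, hz, smul_comm]
  exact hmap x hx

/-- Let `λ ⊢ n` with `d = dim M^λ > 1`, where `M^λ` is the Young
permutation module (the permutation module on `λ`-tabloids) over a field `F` of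
characteristic `p > 0`.  Let `f^λ` be the number of tabloids not fixed by the
transposition `(1,2)`.  Then the top exterior power `Λ^d M^λ` is the trivial module
if `p = 2`, or if `p > 2` and `4 ∣ f^λ`; otherwise it is the sign module. -/
theorem statement4 {p : ℕ} [Fact p.Prime] {F : Type*} [Field F] [CharP F p]
    (n ℓ : ℕ) (hn : 2 ≤ n) (lam : Fin ℓ → ℕ)
    (hpart : ∀ i j : Fin ℓ, i ≤ j → lam j ≤ lam i) (hpos : ∀ i, 0 < lam i)
    (hsum : ∑ i, lam i = n)
    (d : ℕ) (hd : d = Nat.card (Tabloid n ℓ lam)) (hd1 : 1 < d)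
    (fLam : ℕ)
    (hfLam : fLam = Nat.card {t : Tabloid n ℓ lam //
      Equiv.swap (⟨0, by omega⟩ : Fin n) (⟨1, by omega⟩ : Fin n) • t ≠ t}) :
    ((p = 2 ∨ (2 < p ∧ 4 ∣ fLam)) →
      ∀ (g : Equiv.Perm (Fin n)) (x : ExteriorAlgebra F (Tabloid n ℓ lam →₀ F)),
        x ∈ ⋀[F]^d (Tabloid n ℓ lam →₀ F) →
        extAlgRep (ofMulActionFinsupp F (Equiv.Perm (Fin n)) (Tabloid n ℓ lam)) g x = x) ∧
    (¬(p = 2 ∨ (2 < p ∧ 4 ∣ fLam)) →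
      ∀ (g : Equiv.Perm (Fin n)) (x : ExteriorAlgebra F (Tabloid n ℓ lam →₀ F)),
        x ∈ ⋀[F]^d (Tabloid n ℓ lam →₀ F) →
        extAlgRep (ofMulActionFinsupp F (Equiv.Perm (Fin n)) (Tabloid n ℓ lam)) g x =
          ((Equiv.Perm.sign g : ℤ) : F) • x) := by
  have h01 : (⟨0, by omega⟩ : Fin n) ≠ (⟨1, by omega⟩ : Fin n) := by
    simp [Fin.ext_iff]
  set X := Tabloid n ℓ lam with hX
  set τ : Equiv.Perm (Fin n) := Equiv.swap ⟨0, by omega⟩ ⟨1, by omega⟩ with hτdef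
  set φ := MulAction.toPermHom (Equiv.Perm (Fin n)) X with hφ
  set ε : Equiv.Perm (Fin n) →* ℤˣ := Equiv.Perm.sign.comp φ with hε
  have hkey : ∀ (g : Equiv.Perm (Fin n)) (x : ExteriorAlgebra F (X →₀ F)),
      x ∈ ⋀[F]^d (X →₀ F) →
      extAlgRep (ofMulActionFinsupp F (Equiv.Perm (Fin n)) X) g x
        = ((ε g : ℤ) : F) • x :=
    fun g x hx => key_lemma hd g x hx
  have hsupp : fLam = (φ τ).support.card := by
    have e1 : {t : X // τ • t ≠ t} ≃ {t : X // t ∈ (φ τ).support} :=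
      Equiv.subtypeEquivRight (fun t => by
        simp [Equiv.Perm.mem_support, hφ])
    rw [hfLam, Nat.card_congr e1, Nat.card_eq_fintype_card, Fintype.card_coe]
  have hτ2 : φ τ * φ τ = 1 := by
    rw [← map_mul, hτdef, Equiv.swap_mul_self, map_one]
  obtain ⟨k, hk, hsk⟩ := invol_sign_aux (φ τ).support.card (φ τ) le_rfl hτ2
  have hετ : ε τ = (-1) ^ k := hsk
  have hsgnτ : Equiv.Perm.sign τ = -1 := by
    rw [hτdef, Equiv.Perm.sign_swap h01]
  constructor
  · intro h g x hx
    rw [hkey g x hx]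
    suffices hone : ((ε g : ℤ) : F) = 1 by rw [hone, one_smul]
    rcases h with hp2 | ⟨hp, h4⟩
    · subst hp2
      rcases Int.units_eq_one_or (ε g) with h | h <;> rw [h]
      · simp
      · simp only [Units.val_neg, Units.val_one, Int.cast_neg, Int.cast_one]
        exact CharTwo.neg_eq 1
    · have hτ1 : ε τ = 1 := by
        obtain ⟨m, hm⟩ : 2 ∣ k := by omega
        rw [hετ, hm, pow_mul, neg_one_sq, one_pow]
      rw [hom_eq_one_aux hn ε hτ1 g]
      simp
  · intro h g x hx
    push_neg at h
    have hp2 : 2 < p := lt_of_le_of_ne (Fact.out : p.Prime).two_le (Ne.symm h.1)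
    have h4 : ¬ 4 ∣ fLam := h.2 hp2
    have hτ1 : ε τ = -1 := by
      obtain ⟨m, hm⟩ : ∃ m, k = 2 * m + 1 := ⟨k / 2, by omega⟩
      rw [hετ, hm, pow_succ, pow_mul, neg_one_sq, one_pow, one_mul]
    have hsg : ε g = Equiv.Perm.sign g := by
      have hprod : (ε * (Equiv.Perm.sign : Equiv.Perm (Fin n) →* ℤˣ)) τ = 1 := by
        rw [MonoidHom.mul_apply, hτ1, hsgnτ]
        norm_num
      have h2 := hom_eq_one_aux hn _ hprod g
      rw [MonoidHom.mul_apply] at h2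
      rw [eq_inv_of_mul_eq_one_left h2, Int.units_inv_eq_self]
    rw [hkey g x hx, hsg]
end

section
/- Let F be a field of characteristic p > 0, let r, a, n be integers with 1 < r, 2r ≤ n, let d = dim_F M^{(n−r,r)} = C(n,r), and suppose 1 < a ≤ d − 2. Then the exterior power Λ^a M^{(n−r,r)} is a decomposable FS_n-module. -/
/-- The set of `r`-element subsets of `{1,…,n}`; the permutation module on it is the
Young permutation module `M^{(n-r,r)}`. -/
def RSubsets (n r : ℕ) : Type := {s : Finset (Fin n) // s.card = r}

/-- `S_n` acts on `r`-element subsets. -/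
noncomputable instance rSubsetsAction (n r : ℕ) :
    MulAction (Equiv.Perm (Fin n)) (RSubsets n r) where
  smul g s := ⟨s.1.image g, by rw [Finset.card_image_of_injective _ g.injective, s.2]⟩
  one_smul s := Subtype.ext (show s.1.image (1 : Equiv.Perm (Fin n)) = s.1 by simp)
  mul_smul g h s := Subtype.ext
    (show s.1.image (g * h : Equiv.Perm (Fin n)) = (s.1.image h).image g by
      rw [Finset.image_image, ← Equiv.Perm.coe_mul])

set_option linter.unusedVariables false
set_option maxHeartbeats 1000000

open ExteriorAlgebra

/-! ### Basis wedges in the exterior algebra of a finitely supported function space -/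

section Wedge
variable (F : Type*) [Field F] {ι : Type*} [Fintype ι] [LinearOrder ι]

/-- The basis wedge associated to an `a`-element subset of `ι`. -/
noncomputable def wedgeOf (a : ℕ) (S : {s : Finset ι // s.card = a}) :
    ExteriorAlgebra F (ι →₀ F) :=
  ιMulti F a fun i => Finsupp.single ((S.1.orderIsoOfFin S.2 i : ι)) (1 : F)

/-- The alternating "coordinate" map dual to a basis wedge. -/
noncomputable def wedgeAlt (a : ℕ) (S : {s : Finset ι // s.card = a}) :
    (ι →₀ F) [⋀^Fin a]→ₗ[F] F :=
  (Matrix.detRowAlternating (R := F) (n := Fin a)).compLinearMap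
    (LinearMap.pi fun j => Finsupp.lapply ((S.1.orderIsoOfFin S.2 j : ι)))

/-- The coordinate functional on the exterior algebra dual to a basis wedge. -/
noncomputable def wedgeDual (a : ℕ) (S : {s : Finset ι // s.card = a}) :
    ExteriorAlgebra F (ι →₀ F) →ₗ[F] F :=
  liftAlternating (fun i => if h : i = a then h ▸ wedgeAlt F a S else 0)

lemma wedgeDual_wedgeOf (a : ℕ) (S T : {s : Finset ι // s.card = a}) :
    wedgeDual F a S (wedgeOf F a T) = if S = T then 1 else 0 := by
  rw [wedgeOf, wedgeDual, liftAlternating_apply_ιMulti]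
  rw [dif_pos rfl]
  show wedgeAlt F a S _ = _
  rw [wedgeAlt]
  simp only [AlternatingMap.compLinearMap_apply]
  by_cases hST : S = T
  · subst hST
    rw [if_pos rfl]
    have : (fun i => LinearMap.pi (R := F) (fun j => Finsupp.lapply (R := F) (M := F) ((S.1.orderIsoOfFin S.2 j : ι)))
        (Finsupp.single ((S.1.orderIsoOfFin S.2 i : ι)) (1 : F))) = (1 : Matrix (Fin a) (Fin a) F) := by
      funext i j
      simp only [LinearMap.pi_apply, Finsupp.lapply_apply, Finsupp.single_apply, Matrix.one_apply]
      congr 1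
      simp only [eq_iff_iff]
      constructor
      · intro h
        exact (S.1.orderIsoOfFin S.2).injective (Subtype.ext h)
      · intro h; rw [h]
    rw [this]
    exact Matrix.det_one
  · rw [if_neg hST]
    have hne : ¬ (S.1 ⊆ T.1) := by
      intro hsub
      exact hST (Subtype.ext (Finset.eq_of_subset_of_card_le hsub (by rw [S.2, T.2])))
    obtain ⟨x, hxS, hxT⟩ := Finset.not_subset.1 hne
    set j0 : Fin a := (S.1.orderIsoOfFin S.2).symm ⟨x, hxS⟩ with hj0
    apply Matrix.det_eq_zero_of_column_eq_zero j0
    intro i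
    simp only [LinearMap.pi_apply, Finsupp.lapply_apply, Finsupp.single_apply]
    rw [if_neg]
    intro h
    apply hxT
    have : ((S.1.orderIsoOfFin S.2) j0 : ι) = x := by
      rw [hj0, OrderIso.apply_symm_apply]
    rw [← this, ← h]
    exact (T.1.orderIsoOfFin T.2 i).2

lemma image_orderIsoOfFin (a : ℕ) (S : {s : Finset ι // s.card = a}) :
    Finset.univ.image (fun i => (S.1.orderIsoOfFin S.2 i : ι)) = S.1 := by
  ext x
  simp only [Finset.mem_image, Finset.mem_univ, true_and]
  constructor
  · rintro ⟨i, rfl⟩; exact (S.1.orderIsoOfFin S.2 i).2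
  · intro hx; exact ⟨(S.1.orderIsoOfFin S.2).symm ⟨x, hx⟩, by rw [OrderIso.apply_symm_apply]⟩

/-- Any wedge of distinct basis vectors is, up to scalar, a basis wedge. -/
lemma iMulti_single_eq_smul_wedgeOf (a : ℕ) (f : Fin a → ι) (hf : Function.Injective f) :
    ∃ c : F, ιMulti F a (fun i => Finsupp.single (f i) (1 : F)) =
      c • wedgeOf F a ⟨Finset.univ.image f, by
        rw [Finset.card_image_of_injective _ hf, Finset.card_univ, Fintype.card_fin]⟩ := by
  set S : {s : Finset ι // s.card = a} := ⟨Finset.univ.image f, by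
        rw [Finset.card_image_of_injective _ hf, Finset.card_univ, Fintype.card_fin]⟩ with hS
  set iso := S.1.orderIsoOfFin S.2 with hiso
  have hmem : ∀ i, f i ∈ S.1 := fun i => Finset.mem_image_of_mem f (Finset.mem_univ i)
  have hbij : Function.Bijective (fun i => (⟨f i, hmem i⟩ : {x // x ∈ S.1})) := by
    rw [Fintype.bijective_iff_injective_and_card]
    constructor
    · intro i j hij
      exact hf (congrArg Subtype.val hij)
    · rw [Fintype.card_coe, S.2, Fintype.card_fin]
  set σ : Equiv.Perm (Fin a) := (Equiv.ofBijective _ hbij).trans iso.toEquiv.symm with hσ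
  have hcomp : ∀ i, (iso (σ i) : ι) = f i := by
    intro i
    have : iso (σ i) = ⟨f i, hmem i⟩ := by
      show iso (iso.toEquiv.symm _) = _
      exact iso.apply_symm_apply _
    rw [this]
  refine ⟨(((Equiv.Perm.sign σ : ℤ) : F)), ?_⟩
  have hv : (fun i => Finsupp.single (f i) (1:F)) =
      (fun i => Finsupp.single ((iso i : ι)) (1:F)) ∘ σ := by
    funext i
    simp only [Function.comp_apply, hcomp i]
  rw [hv, AlternatingMap.map_perm, wedgeOf, Units.smul_def, Int.cast_smul_eq_zsmul]

/-- The basis wedges span the `a`-th exterior power. -/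
lemma span_wedgeOf (a : ℕ) :
    Submodule.span F (Set.range (wedgeOf F (ι := ι) a)) = ⋀[F]^a (ι →₀ F) := by
  rw [← ιMulti_span_fixedDegree]
  refine le_antisymm (Submodule.span_le.2 ?_) (Submodule.span_le.2 ?_)
  · rintro _ ⟨S, rfl⟩
    exact Submodule.subset_span ⟨_, rfl⟩
  · rintro _ ⟨v, rfl⟩
    have hv : ∀ i, v i = ∑ j, (v i) j • Finsupp.single j (1 : F) := by
      intro i
      ext j'
      rw [Finsupp.finset_sum_apply]
      simp [Finsupp.single_apply, Finset.sum_ite_eq, mul_comm]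
    have expand : ιMulti F a v =
        ∑ t : Fin a → ι, (∏ i, (v i) (t i)) • ιMulti F a (fun i => Finsupp.single (t i) (1:F)) := by
      conv_lhs => rw [show v = (fun i => ∑ j, (v i) j • Finsupp.single j (1 : F)) from funext hv]
      rw [show (ιMulti F a (fun i => ∑ j, (v i) j • Finsupp.single j (1 : F)) : ExteriorAlgebra F (ι →₀ F)) =
        (ιMulti F a).toMultilinearMap (fun i => ∑ j, (v i) j • Finsupp.single j (1 : F)) from rfl]
      rw [MultilinearMap.map_sum]
      refine Finset.sum_congr rfl fun t _ => ?_
      rw [MultilinearMap.map_smul_univ]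
      rfl
    rw [expand]
    refine Submodule.sum_mem _ fun t _ => Submodule.smul_mem _ _ ?_
    by_cases ht : Function.Injective t
    · obtain ⟨c, hc⟩ := iMulti_single_eq_smul_wedgeOf F a t ht
      rw [hc]
      exact Submodule.smul_mem _ _ (Submodule.subset_span ⟨_, rfl⟩)
    · have : ¬ Function.Injective (fun i => Finsupp.single (t i) (1:F)) := by
        intro h
        apply ht
        intro i j hij
        exact h (a₁ := i) (a₂ := j)
          (show Finsupp.single (t i) (1:F) = Finsupp.single (t j) 1 by rw [hij])
      rw [(ιMulti F a).map_eq_zero_of_not_injective _ this]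
      exact Submodule.zero_mem _

lemma wedgeOf_linearIndependent (a : ℕ) :
    LinearIndependent F (wedgeOf F (ι := ι) a) := by
  rw [Fintype.linearIndependent_iff]
  intro g hg S
  have h2 := congrArg (wedgeDual F a S) hg
  rw [map_sum, map_zero] at h2
  simp only [map_smul, wedgeDual_wedgeOf, smul_eq_mul, mul_ite, mul_one, mul_zero] at h2
  rwa [Finset.sum_ite_eq, if_pos (Finset.mem_univ S)] at h2

lemma wedgeOf_ne_zero (a : ℕ) (S : {s : Finset ι // s.card = a}) :
    wedgeOf F a S ≠ 0 := by
  intro h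
  have h2 := wedgeDual_wedgeOf F a S S
  rw [h, map_zero, if_pos rfl] at h2
  exact zero_ne_one h2

end Wedge

lemma exists_sum_ne_zero {ι : Type*} [DecidableEq ι] (δ : ι → ℤ) (U : Finset ι) (x₀ : ι)
    (hx₀ : x₀ ∈ U) (hδ : δ x₀ ≠ 0) (m : ℕ) (hm : 1 ≤ m) (hU : m + 1 ≤ U.card) :
    ∃ T : Finset ι, T ⊆ U ∧ T.card = m ∧ ∑ x ∈ T, δ x ≠ 0 := by
  obtain ⟨T₀, hT₀sub, hT₀card⟩ := Finset.exists_subset_card_eq (s := U.erase x₀) (n := m) (by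
    rw [Finset.card_erase_of_mem hx₀]; omega)
  have hT₀U : T₀ ⊆ U := hT₀sub.trans (Finset.erase_subset _ _)
  by_cases h0 : ∑ x ∈ T₀, δ x ≠ 0
  · exact ⟨T₀, hT₀U, hT₀card, h0⟩
  push_neg at h0
  have hx₀T₀ : x₀ ∉ T₀ := fun h => (Finset.notMem_erase x₀ U) (hT₀sub h)
  have hne : ∃ y ∈ T₀, δ y ≠ δ x₀ := by
    by_contra hall
    push_neg at hall
    have hs : ∑ x ∈ T₀, δ x = (m : ℤ) * δ x₀ := by
      rw [Finset.sum_congr rfl hall, Finset.sum_const, hT₀card, nsmul_eq_mul]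
    rw [h0] at hs
    have hmne : (m : ℤ) ≠ 0 := by exact_mod_cast (by omega : m ≠ 0)
    exact (mul_ne_zero hmne hδ) hs.symm
  obtain ⟨y, hyT₀, hy⟩ := hne
  have hx₀e : x₀ ∉ T₀.erase y := fun h => hx₀T₀ (Finset.erase_subset _ _ h)
  refine ⟨insert x₀ (T₀.erase y), ?_, ?_, ?_⟩
  · intro z hz
    rcases Finset.mem_insert.1 hz with rfl | hz
    · exact hx₀
    · exact hT₀U (Finset.erase_subset _ _ hz)
  · rw [Finset.card_insert_of_notMem hx₀e, Finset.card_erase_of_mem hyT₀, hT₀card]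
    omega
  · rw [Finset.sum_insert hx₀e, Finset.sum_erase_eq_sub hyT₀, h0]
    intro hc
    apply hy
    omega

section ABC
variable {n r : ℕ}

def setA (hr : 1 < r) (hrn : 2 * r ≤ n) : Finset (Fin n) :=
  (Finset.range r).attachFin (fun m hm => lt_of_lt_of_le (Finset.mem_range.1 hm) (by omega))

def setB (hr : 1 < r) (hrn : 2 * r ≤ n) : Finset (Fin n) :=
  (insert r (Finset.range (r - 1))).attachFin (fun m hm => by
    rcases Finset.mem_insert.1 hm with rfl | hm
    · omega
    · have := Finset.mem_range.1 hm; omega)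

def setC (hr : 1 < r) (hrn : 2 * r ≤ n) : Finset (Fin n) :=
  ((Finset.range (2 * r)) \ (Finset.range r)).attachFin (fun m hm => by
    have := Finset.mem_range.1 (Finset.mem_sdiff.1 hm).1; omega)

lemma card_setA (hr : 1 < r) (hrn : 2 * r ≤ n) : (setA hr hrn).card = r := by
  rw [setA, Finset.card_attachFin, Finset.card_range]

lemma card_setB (hr : 1 < r) (hrn : 2 * r ≤ n) : (setB hr hrn).card = r := by
  rw [setB, Finset.card_attachFin, Finset.card_insert_of_notMem (by
    intro h; have := Finset.mem_range.1 h; omega), Finset.card_range]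
  omega

lemma card_setC (hr : 1 < r) (hrn : 2 * r ≤ n) : (setC hr hrn).card = r := by
  rw [setC, Finset.card_attachFin, Finset.card_sdiff_of_subset (Finset.range_subset_range.2 (by omega)),
    Finset.card_range, Finset.card_range]
  omega

lemma attachFin_inter {n : ℕ} (s t : Finset ℕ) (hs : ∀ m ∈ s, m < n) (ht : ∀ m ∈ t, m < n) :
    s.attachFin hs ∩ t.attachFin ht =
      (s ∩ t).attachFin (fun m hm => hs m (Finset.mem_inter.1 hm).1) := by
  ext x
  simp [Finset.mem_attachFin]

lemma card_setA_inter_setB (hr : 1 < r) (hrn : 2 * r ≤ n) : ((setB hr hrn) ∩ (setA hr hrn)).card = r - 1 := by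
  rw [setA, setB, attachFin_inter, Finset.card_attachFin]
  have : (insert r (Finset.range (r - 1))) ∩ Finset.range r = Finset.range (r - 1) := by
    ext m
    simp only [Finset.mem_inter, Finset.mem_insert, Finset.mem_range]
    omega
  rw [this, Finset.card_range]

lemma card_setA_inter_setC (hr : 1 < r) (hrn : 2 * r ≤ n) : ((setC hr hrn) ∩ (setA hr hrn)).card = 0 := by
  rw [setA, setC, attachFin_inter, Finset.card_attachFin]
  have : ((Finset.range (2 * r)) \ (Finset.range r)) ∩ Finset.range r = ∅ := by
    ext m
    simp only [Finset.mem_inter, Finset.mem_sdiff, Finset.mem_range, Finset.notMem_empty, iff_false]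
    omega
  rw [this, Finset.card_empty]

lemma setA_ne_setB (hr : 1 < r) (hrn : 2 * r ≤ n) : setA hr hrn ≠ setB hr hrn := by
  intro h
  have : (⟨r, by omega⟩ : Fin n) ∈ setB hr hrn := by
    rw [setB, Finset.mem_attachFin]; simp
  rw [← h, setA, Finset.mem_attachFin, Finset.mem_range] at this
  simp only [Fin.val_mk] at this
  omega

lemma setA_ne_setC (hr : 1 < r) (hrn : 2 * r ≤ n) : setA hr hrn ≠ setC hr hrn := by
  intro h
  have : (⟨0, by omega⟩ : Fin n) ∈ setA hr hrn := by
    rw [setA, Finset.mem_attachFin, Finset.mem_range]; simp only [Fin.val_mk]; omega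
  rw [h, setC, Finset.mem_attachFin, Finset.mem_sdiff, Finset.mem_range, Finset.mem_range] at this
  simp only [Fin.val_mk] at this
  omega

lemma setB_ne_setC (hr : 1 < r) (hrn : 2 * r ≤ n) : setB hr hrn ≠ setC hr hrn := by
  intro h
  have : (⟨0, by omega⟩ : Fin n) ∈ setB hr hrn := by
    rw [setB, Finset.mem_attachFin]
    simp only [Finset.mem_insert, Finset.mem_range]
    omega
  rw [h, setC, Finset.mem_attachFin, Finset.mem_sdiff, Finset.mem_range, Finset.mem_range] at this
  simp only [Fin.val_mk] at this
  omega

end ABC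

/-! ### Instances and invariants for `RSubsets` -/

instance (n r : ℕ) : DecidableEq (RSubsets n r) :=
  show DecidableEq {s : Finset (Fin n) // s.card = r} from inferInstance

instance (n r : ℕ) : Fintype (RSubsets n r) :=
  show Fintype {s : Finset (Fin n) // s.card = r} from inferInstance

noncomputable instance (n r : ℕ) : LinearOrder (RSubsets n r) :=
  LinearOrder.lift' (fun s => (Fintype.equivFin (RSubsets n r)) s) (Equiv.injective _)

lemma card_rSubsets (n r : ℕ) : Fintype.card (RSubsets n r) = n.choose r := by
  rw [show Fintype.card (RSubsets n r) =
    Fintype.card {s : Finset (Fin n) // s.card = r} from rfl]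
  rw [Fintype.card_finset_len, Fintype.card_fin]

/-- The `S_n`-invariant: sum of cardinalities of pairwise intersections. -/
noncomputable def phi (n r : ℕ) (T : Finset (RSubsets n r)) : ℤ :=
  ∑ x ∈ T, ∑ y ∈ T, ((x.1 ∩ y.1).card : ℤ)

lemma smul_val (n r : ℕ) (g : Equiv.Perm (Fin n)) (x : RSubsets n r) :
    (g • x).1 = x.1.image g := rfl

lemma phi_smul (n r : ℕ) (g : Equiv.Perm (Fin n)) (T : Finset (RSubsets n r)) :
    phi n r (T.image (fun x => g • x)) = phi n r T := by
  have hinj : ∀ x ∈ T, ∀ y ∈ T, g • x = g • y → x = y :=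
    fun x _ y _ h => MulAction.injective g h
  rw [phi, Finset.sum_image hinj, phi]
  refine Finset.sum_congr rfl fun x hx => ?_
  rw [Finset.sum_image hinj]
  refine Finset.sum_congr rfl fun y hy => ?_
  rw [smul_val, smul_val, ← Finset.image_inter _ _ g.injective,
    Finset.card_image_of_injective _ g.injective]

lemma phi_insert (n r : ℕ) (b : RSubsets n r) (T : Finset (RSubsets n r)) (hb : b ∉ T) :
    phi n r (insert b T) =
      phi n r T + 2 * (∑ x ∈ T, ((b.1 ∩ x.1).card : ℤ)) + ((b.1 ∩ b.1).card : ℤ) := by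
  rw [phi, Finset.sum_insert hb, Finset.sum_insert hb]
  have h1 : ∀ x ∈ T, ∑ y ∈ insert b T, (((x : RSubsets n r).1 ∩ y.1).card : ℤ)
      = ((x.1 ∩ b.1).card : ℤ) + ∑ y ∈ T, ((x.1 ∩ y.1).card : ℤ) :=
    fun x _ => Finset.sum_insert hb
  rw [Finset.sum_congr rfl h1, Finset.sum_add_distrib]
  have hcomm : ∀ x ∈ T, ((x.1 ∩ b.1).card : ℤ) = ((b.1 ∩ x.1).card : ℤ) := by
    intro x _; rw [Finset.inter_comm]
  rw [Finset.sum_congr rfl hcomm, phi]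
  ring

/-- Equivariance: the exterior action maps a basis wedge to a scalar multiple of a basis
wedge, whose index is the image of the original index. -/
lemma extAlgRep_wedgeOf {F : Type*} [Field F] (n r a : ℕ) (g : Equiv.Perm (Fin n))
    (S : {s : Finset (RSubsets n r) // s.card = a}) :
    ∃ c : F, extAlgRep (ofMulActionFinsupp F (Equiv.Perm (Fin n)) (RSubsets n r)) g
        (wedgeOf F a S) =
      c • wedgeOf F a ⟨S.1.image (fun x => g • x), by
        rw [Finset.card_image_of_injective _ (MulAction.injective g), S.2]⟩ := by
  set ρ := ofMulActionFinsupp F (Equiv.Perm (Fin n)) (RSubsets n r) with hρ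
  have h0 : extAlgRep ρ g (wedgeOf F a S) =
      ιMulti F a (fun i =>
        ρ g (Finsupp.single ((S.1.orderIsoOfFin S.2 i : RSubsets n r)) (1:F))) := by
    show (ExteriorAlgebra.map (ρ g)).toLinearMap (wedgeOf F a S) = _
    rw [wedgeOf, AlgHom.toLinearMap_apply, map_apply_ιMulti]
    rfl
  have h1 : (fun i => ρ g (Finsupp.single ((S.1.orderIsoOfFin S.2 i : RSubsets n r)) (1:F)))
      = fun i => Finsupp.single (g • (S.1.orderIsoOfFin S.2 i : RSubsets n r)) (1:F) := by
    funext i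
    show Finsupp.mapDomain (g • ·) (Finsupp.single _ (1:F)) = _
    exact Finsupp.mapDomain_single
  have hf : Function.Injective (fun i => g • (S.1.orderIsoOfFin S.2 i : RSubsets n r)) := by
    intro i j hij
    exact (S.1.orderIsoOfFin S.2).injective (Subtype.ext (MulAction.injective g hij))
  obtain ⟨c, hc⟩ := iMulti_single_eq_smul_wedgeOf F a _ hf
  refine ⟨c, ?_⟩
  rw [h0, h1, hc]
  congr 1
  congr 1
  apply Subtype.ext
  ext x
  simp only [Finset.mem_image, Finset.mem_univ, true_and]
  constructor
  · rintro ⟨i, rfl⟩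
    exact ⟨(S.1.orderIsoOfFin S.2 i : RSubsets n r), (S.1.orderIsoOfFin S.2 i).2, rfl⟩
  · rintro ⟨y, hy, rfl⟩
    exact ⟨(S.1.orderIsoOfFin S.2).symm ⟨y, hy⟩, by rw [OrderIso.apply_symm_apply]⟩

/-- Let `F` be a field of characteristic `p > 0`, `1 < r`, `2r ≤ n`,
`d = dim M^{(n-r,r)} = C(n,r)`, and `1 < a ≤ d - 2`.  Then `Λ^a M^{(n-r,r)}` is a
decomposable `FS_n`-module, where `M^{(n-r,r)}` is the permutation module on the
`r`-element subsets of `{1,…,n}`. -/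
theorem statement6 {p : ℕ} [Fact p.Prime] {F : Type*} [Field F] [CharP F p]
    (n r : ℕ) (hr : 1 < r) (hrn : 2 * r ≤ n)
    (a : ℕ) (ha : 1 < a) (had : a + 2 ≤ n.choose r) :
    ∃ W₁ W₂ : Submodule F (ExteriorAlgebra F (RSubsets n r →₀ F)),
      W₁ ≠ ⊥ ∧ W₂ ≠ ⊥ ∧ W₁ ⊓ W₂ = ⊥ ∧
      W₁ ⊔ W₂ = ⋀[F]^a (RSubsets n r →₀ F) ∧
      (∀ (g : Equiv.Perm (Fin n)), ∀ x ∈ W₁,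
        extAlgRep (ofMulActionFinsupp F (Equiv.Perm (Fin n)) (RSubsets n r)) g x ∈ W₁) ∧
      (∀ (g : Equiv.Perm (Fin n)), ∀ x ∈ W₂,
        extAlgRep (ofMulActionFinsupp F (Equiv.Perm (Fin n)) (RSubsets n r)) g x ∈ W₂) := by
  -- the three distinguished `r`-subsets
  set Ai : RSubsets n r := ⟨setA hr hrn, card_setA hr hrn⟩ with hAi
  set Bi : RSubsets n r := ⟨setB hr hrn, card_setB hr hrn⟩ with hBi
  set Ci : RSubsets n r := ⟨setC hr hrn, card_setC hr hrn⟩ with hCi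
  have hAB : Ai ≠ Bi := fun h => setA_ne_setB hr hrn (congrArg Subtype.val h)
  have hAC : Ai ≠ Ci := fun h => setA_ne_setC hr hrn (congrArg Subtype.val h)
  have hBC : Bi ≠ Ci := fun h => setB_ne_setC hr hrn (congrArg Subtype.val h)
  -- the discrepancy function
  set δ : RSubsets n r → ℤ :=
    fun x => ((Bi.1 ∩ x.1).card : ℤ) - ((Ci.1 ∩ x.1).card : ℤ) with hδ
  have hδA : δ Ai ≠ 0 := by
    have e1 : (Bi.1 ∩ Ai.1).card = r - 1 := card_setA_inter_setB hr hrn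
    have e2 : (Ci.1 ∩ Ai.1).card = 0 := card_setA_inter_setC hr hrn
    rw [hδ]
    simp only [e1, e2]
    omega
  -- find a suitable `T`
  set U : Finset (RSubsets n r) := Finset.univ \ {Bi, Ci} with hU
  have hAU : Ai ∈ U := by
    rw [hU, Finset.mem_sdiff]
    refine ⟨Finset.mem_univ _, ?_⟩
    simp only [Finset.mem_insert, Finset.mem_singleton]
    tauto
  have hUcard : a - 1 + 1 ≤ U.card := by
    have h1 : ({Bi, Ci} : Finset (RSubsets n r)).card = 2 := Finset.card_pair hBC
    have h2 : U.card = Fintype.card (RSubsets n r) - 2 := by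
      rw [hU, Finset.card_sdiff_of_subset (Finset.subset_univ _), Finset.card_univ, h1]
    rw [h2, card_rSubsets]
    omega
  obtain ⟨T, hTU, hTcard, hTsum⟩ :=
    exists_sum_ne_zero δ U Ai hAU hδA (a - 1) (by omega) hUcard
  have hBT : Bi ∉ T := by
    intro h
    have := hTU h
    rw [hU, Finset.mem_sdiff] at this
    exact this.2 (by simp)
  have hCT : Ci ∉ T := by
    intro h
    have := hTU h
    rw [hU, Finset.mem_sdiff] at this
    exact this.2 (by simp)
  set S₁ : {s : Finset (RSubsets n r) // s.card = a} :=
    ⟨insert Bi T, by rw [Finset.card_insert_of_notMem hBT, hTcard]; omega⟩ with hS₁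
  set S₂ : {s : Finset (RSubsets n r) // s.card = a} :=
    ⟨insert Ci T, by rw [Finset.card_insert_of_notMem hCT, hTcard]; omega⟩ with hS₂
  -- the two families have different invariants
  have hphi : phi n r S₁.1 ≠ phi n r S₂.1 := by
    have e1 := phi_insert n r Bi T hBT
    have e2 := phi_insert n r Ci T hCT
    have hBB : ((Bi.1 ∩ Bi.1).card : ℤ) = (r : ℤ) := by rw [Finset.inter_self, Bi.2]
    have hCC : ((Ci.1 ∩ Ci.1).card : ℤ) = (r : ℤ) := by rw [Finset.inter_self, Ci.2]
    have hsum : ∑ x ∈ T, δ x =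
        (∑ x ∈ T, ((Bi.1 ∩ x.1).card : ℤ)) - ∑ x ∈ T, ((Ci.1 ∩ x.1).card : ℤ) := by
      rw [hδ, Finset.sum_sub_distrib]
    intro h
    apply hTsum
    rw [show S₁.1 = insert Bi T from rfl, show S₂.1 = insert Ci T from rfl] at h
    omega
  -- the invariant subsets of wedge indices
  set P : {s : Finset (RSubsets n r) // s.card = a} → Prop :=
    fun S => phi n r S.1 = phi n r S₁.1 with hP
  set W₁ : Submodule F (ExteriorAlgebra F (RSubsets n r →₀ F)) :=
    Submodule.span F (wedgeOf F a '' {S | P S}) with hW₁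
  set W₂ : Submodule F (ExteriorAlgebra F (RSubsets n r →₀ F)) :=
    Submodule.span F (wedgeOf F a '' {S | ¬ P S}) with hW₂
  have hinv : ∀ (Q : {s : Finset (RSubsets n r) // s.card = a} → Prop)
      (hQ : ∀ S (g : Equiv.Perm (Fin n)), Q S → Q ⟨S.1.image (fun x => g • x), by
        rw [Finset.card_image_of_injective _ (MulAction.injective g), S.2]⟩)
      (g : Equiv.Perm (Fin n)), ∀ x ∈ Submodule.span F (wedgeOf F a '' {S | Q S}),
      extAlgRep (ofMulActionFinsupp F (Equiv.Perm (Fin n)) (RSubsets n r)) g x ∈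
        Submodule.span F (wedgeOf F a '' {S | Q S}) := by
    intro Q hQ g x hx
    have hmap : (Submodule.span F (wedgeOf F a '' {S | Q S})).map
        (extAlgRep (ofMulActionFinsupp F (Equiv.Perm (Fin n)) (RSubsets n r)) g)
        ≤ Submodule.span F (wedgeOf F a '' {S | Q S}) := by
      rw [Submodule.map_span, Submodule.span_le]
      rintro _ ⟨_, ⟨S, hS, rfl⟩, rfl⟩
      obtain ⟨c, hc⟩ := extAlgRep_wedgeOf (F := F) n r a g S
      rw [hc]
      exact Submodule.smul_mem _ _ (Submodule.subset_span ⟨_, hQ S g hS, rfl⟩)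
    exact hmap (Submodule.mem_map_of_mem hx)
  have hQinv : ∀ (S : {s : Finset (RSubsets n r) // s.card = a}) (g : Equiv.Perm (Fin n)),
      phi n r (S.1.image (fun x : RSubsets n r => g • x)) = phi n r S.1 :=
    fun S g => phi_smul n r g S.1
  refine ⟨W₁, W₂, ?_, ?_, ?_, ?_, ?_, ?_⟩
  · -- W₁ ≠ ⊥
    intro h
    have hmem : wedgeOf F a S₁ ∈ W₁ :=
      Submodule.subset_span ⟨S₁, rfl, rfl⟩
    rw [h, Submodule.mem_bot] at hmem
    exact wedgeOf_ne_zero F a S₁ hmem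
  · -- W₂ ≠ ⊥
    intro h
    have hmem : wedgeOf F a S₂ ∈ W₂ :=
      Submodule.subset_span ⟨S₂, fun hc => hphi hc.symm, rfl⟩
    rw [h, Submodule.mem_bot] at hmem
    exact wedgeOf_ne_zero F a S₂ hmem
  · -- W₁ ⊓ W₂ = ⊥
    have hdisj : Disjoint {S | P S} {S | ¬ P S} := by
      rw [Set.disjoint_left]
      intro S h1 h2
      exact h2 h1
    exact disjoint_iff.mp ((wedgeOf_linearIndependent F a).disjoint_span_image hdisj)
  · -- W₁ ⊔ W₂ = ⋀[F]^a
    rw [hW₁, hW₂, ← Submodule.span_union, ← Set.image_union]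
    have huniv : ({S | P S} ∪ {S | ¬ P S}) = Set.univ := by
      ext S
      simp only [Set.mem_union, Set.mem_setOf_eq, Set.mem_univ, iff_true]
      exact em (P S)
    rw [huniv, Set.image_univ, span_wedgeOf]
  · -- invariance of W₁
    refine hinv P ?_
    intro S g hS
    show phi n r (S.1.image (fun x => g • x)) = phi n r S₁.1
    rw [hQinv S g]
    exact hS
  · -- invariance of W₂
    refine hinv (fun S => ¬ P S) ?_
    intro S g hS hc
    apply hS
    have h5 : phi n r (S.1.image (fun x => g • x)) = phi n r S₁.1 := hc
    rw [hQinv S g] at h5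
    exact h5
end

section
/- Let λ be a partition of n with λ ≠ (n), and let {u}, {v} be distinct λ-tabloids. Suppose there exists g ∈ S_n with g{u} = {v} and g{v} = {u}. Let H be the subgroup of S_n consisting of all h such that either (h{u} = {u} and h{v} = {v}) or (h{u} = {v} and h{v} = {u}). Then there exists an involution e ∈ S_n with e{u} = {v}, e{v} = {u}, and H = (R({u}) ∩ R({v})) ⋊ ⟨e⟩, where R({t}) denotes the row stabilizer of the tabloid {t}. Moreover, if g itself is an involution, one may take e = g. -/
/-- Let `λ ⊢ n`, `λ ≠ (n)`, and let `{u} ≠ {v}` be `λ`-tabloids that are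
swapped by some `g ∈ S_n`.  Let `H` be the stabilizer of the unordered pair
`{{u},{v}}`.  Then there is an involution `e` swapping `{u}` and `{v}` such that
`H = (R({u}) ∩ R({v})) ⋊ ⟨e⟩`: `e` normalizes `R({u}) ∩ R({v})` and every element of
`H` is either in `R({u}) ∩ R({v})` or of the form `r·e` with `r` there.  Moreover if
`g` itself is an involution one may take `e = g`. -/
theorem statement8 (n ℓ : ℕ) (lam : Fin ℓ → ℕ) (hℓ : 2 ≤ ℓ)
    (hpart : ∀ i j : Fin ℓ, i ≤ j → lam j ≤ lam i) (hpos : ∀ i, 0 < lam i)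
    (u v : Tabloid n ℓ lam) (huv : u ≠ v)
    (g : Equiv.Perm (Fin n)) (hgu : g • u = v) (hgv : g • v = u) :
    ∃ e : Equiv.Perm (Fin n), e * e = 1 ∧ (g * g = 1 → e = g) ∧
      e • u = v ∧ e • v = u ∧
      (∀ r : Equiv.Perm (Fin n), r • u = u → r • v = v →
        (e * r * e⁻¹) • u = u ∧ (e * r * e⁻¹) • v = v) ∧
      (∀ h : Equiv.Perm (Fin n),
        ((h • u = u ∧ h • v = v) ∨ (h • u = v ∧ h • v = u)) ↔
        ((h • u = u ∧ h • v = v) ∨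
          ∃ r : Equiv.Perm (Fin n), r • u = u ∧ r • v = v ∧ h = r * e)) := by
  classical
  -- generic consequences of having an involution `e` swapping `u` and `v`
  have key : ∀ e : Equiv.Perm (Fin n), e * e = 1 → e • u = v → e • v = u →
      (∀ r : Equiv.Perm (Fin n), r • u = u → r • v = v →
        (e * r * e⁻¹) • u = u ∧ (e * r * e⁻¹) • v = v) ∧
      (∀ h : Equiv.Perm (Fin n),
        ((h • u = u ∧ h • v = v) ∨ (h • u = v ∧ h • v = u)) ↔
        ((h • u = u ∧ h • v = v) ∨
          ∃ r : Equiv.Perm (Fin n), r • u = u ∧ r • v = v ∧ h = r * e)) := by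
    intro e he heu hev
    have hinv : e⁻¹ = e := by
      rw [inv_eq_iff_mul_eq_one]; exact he
    constructor
    · intro r hru hrv
      constructor
      · rw [mul_smul, mul_smul, hinv, heu, hrv, hev]
      · rw [mul_smul, mul_smul, hinv, hev, hru, heu]
    · intro h
      constructor
      · rintro (h1 | ⟨h1, h2⟩)
        · exact Or.inl h1
        · refine Or.inr ⟨h * e⁻¹, ?_, ?_, by group⟩
          · rw [mul_smul, hinv, heu, h2]
          · rw [mul_smul, hinv, hev, h1]
      · rintro (h1 | ⟨r, hr1, hr2, rfl⟩)
        · exact Or.inl h1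
        · refine Or.inr ⟨?_, ?_⟩
          · rw [mul_smul, heu, hr2]
          · rw [mul_smul, hev, hr1]
  by_cases hg : g * g = 1
  · obtain ⟨k1, k2⟩ := key g hg hgu hgv
    exact ⟨g, hg, fun _ => rfl, hgu, hgv, k1, k2⟩
  · -- construct an involution from `g`
    set U := u.1 with hU
    set V := v.1 with hV
    have hsmul : ∀ (w : Equiv.Perm (Fin n)) (t : Tabloid n ℓ lam) (x : Fin n),
        (w • t).1 x = t.1 (w⁻¹ x) := fun _ _ _ => rfl
    have hVg : ∀ x, V (g x) = U x := by
      intro x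
      have h1 : (g • u).1 (g x) = v.1 (g x) := by rw [hgu]
      rw [hsmul] at h1
      simpa using h1.symm
    have hUg : ∀ x, U (g x) = V x := by
      intro x
      have h1 : (g • v).1 (g x) = u.1 (g x) := by rw [hgv]
      rw [hsmul] at h1
      simpa using h1.symm
    set f : Fin n → Fin n := fun x =>
      if U x = V x then x else if U x < V x then g⁻¹ x else g x with hf
    have hUgi : ∀ x, U (g⁻¹ x) = V x := by
      intro x; have := hVg (g⁻¹ x); simpa using this.symm
    have hVgi : ∀ x, V (g⁻¹ x) = U x := by
      intro x; have := hUg (g⁻¹ x); simpa using this.symm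
    have hfi : Function.Involutive f := by
      intro x
      by_cases h1 : U x = V x
      · simp [hf, h1]
      · by_cases h2 : U x < V x
        · have e1 : U (g⁻¹ x) = V x := hUgi x
          have e2 : V (g⁻¹ x) = U x := hVgi x
          have : ¬ U (g⁻¹ x) = V (g⁻¹ x) := by rw [e1, e2]; exact fun h => h1 h.symm
          have hlt : ¬ U (g⁻¹ x) < V (g⁻¹ x) := by rw [e1, e2]; exact fun h => absurd h2 (not_lt_of_gt h)
          simp only [Equiv.Perm.inv_def] at this hlt
          simp [hf, h1, h2, this, hlt]
        · have e1 : U (g x) = V x := hUg x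
          have e2 : V (g x) = U x := hVg x
          have hne : ¬ U (g x) = V (g x) := by rw [e1, e2]; exact fun h => h1 h.symm
          have hlt : U (g x) < V (g x) := by
            rw [e1, e2]; exact lt_of_le_of_ne (le_of_not_gt h2) fun h => h1 h.symm
          simp [hf, h1, h2, hne, hlt]
    set e : Equiv.Perm (Fin n) := hfi.toPerm f with hedef
    have heapp : ∀ x, e x = f x := fun _ => rfl
    have hesymm : ∀ x, e⁻¹ x = f x := fun _ => rfl
    have hUf : ∀ x, U (f x) = V x := by
      intro x
      by_cases h1 : U x = V x
      · simp [hf, h1]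
      · by_cases h2 : U x < V x
        · simpa [hf, h1, h2] using hUgi x
        · simp [hf, h1, h2, hUg x]
    have hVf : ∀ x, V (f x) = U x := by
      intro x
      by_cases h1 : U x = V x
      · rw [show f x = x by simp [hf, h1], h1]
      · by_cases h2 : U x < V x
        · simpa [hf, h1, h2] using hVgi x
        · simp [hf, h1, h2, hVg x]
    have hee : e * e = 1 := Equiv.ext fun x => hfi x
    have heu : e • u = v := by
      apply Subtype.ext
      funext x
      show U (e⁻¹ x) = V x
      rw [hesymm]; exact hUf x
    have hev : e • v = u := by
      apply Subtype.ext
      funext x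
      show V (e⁻¹ x) = U x
      rw [hesymm]; exact hVf x
    obtain ⟨k1, k2⟩ := key e hee heu hev
    exact ⟨e, hee, fun h => absurd h hg, heu, hev, k1, k2⟩
end

section
/- Let P be a p-subgroup of S_n and let O_1, ..., O_s be the orbits of {1, ..., n} under P. Then P is conjugate in S_n to a Sylow p-subgroup of some Young subgroup of S_n if and only if P is itself a Sylow p-subgroup of Sym(O_1) × ... × Sym(O_s). -/
/-- The Young subgroup of `S_n` attached to an ordered set partition of `{1,…,n}`
(encoded by a function `f`): the direct product of the symmetric groups on the
fibres of `f`. -/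
def YoungSubgroup {n k : ℕ} (f : Fin n → Fin k) : Subgroup (Equiv.Perm (Fin n)) where
  carrier := {g | ∀ x, f (g x) = f x}
  one_mem' := fun _ => rfl
  mul_mem' := fun {a b} ha hb x => by
    rw [Equiv.Perm.mul_apply, ha, hb]
  inv_mem' := fun {a} ha x => by
    have h := ha (a⁻¹ x)
    rw [Equiv.Perm.coe_inv, Equiv.apply_symm_apply] at h
    exact h.symm

/-- A subgroup of `S_n` is a Young `p`-subgroup if it is conjugate to a Sylow
`p`-subgroup of some Young subgroup of `S_n`. -/
def IsYoungPSubgroup (p : ℕ) {n : ℕ} (P : Subgroup (Equiv.Perm (Fin n))) : Prop :=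
  ∃ (k : ℕ) (f : Fin n → Fin k) (Q : Subgroup (Equiv.Perm (Fin n))) (g : Equiv.Perm (Fin n)),
    IsPGroup p Q ∧ Q ≤ YoungSubgroup f ∧
    (∀ R : Subgroup (Equiv.Perm (Fin n)), IsPGroup p R → R ≤ YoungSubgroup f → Q ≤ R → R = Q) ∧
    Q.map (MulAut.conj g).toMonoidHom = P

/-- Let `P` be a `p`-subgroup of `S_n`.  Then `P` is conjugate in `S_n`
to a Sylow `p`-subgroup of a Young subgroup if and only if `P` is itself a Sylow
`p`-subgroup of `Sym(O_1) × ⋯ × Sym(O_s)`, the product of the symmetric groups on the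
`P`-orbits of `{1,…,n}`. -/
theorem statement11 (p : ℕ) (hp : p.Prime) (n : ℕ)
    (P : Subgroup (Equiv.Perm (Fin n))) (hP : IsPGroup p P) :
    IsYoungPSubgroup p P ↔
      ((∀ g ∈ P, ∀ x : Fin n, g x ∈ MulAction.orbit P x) ∧
        ∀ Q : Subgroup (Equiv.Perm (Fin n)), IsPGroup p Q → P ≤ Q →
          (∀ g ∈ Q, ∀ x : Fin n, g x ∈ MulAction.orbit P x) → Q = P) := by
  classical
  constructor
  · rintro ⟨k, f, Q, g, hQp, hQle, hQmax, hmap⟩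
    refine ⟨fun h hh x => ⟨⟨h, hh⟩, rfl⟩, ?_⟩
    intro R hRp hPR hRorb
    -- the conjugate of R back by g
    set R' : Subgroup (Equiv.Perm (Fin n)) := R.map (MulAut.conj g⁻¹).toMonoidHom with hR'
    have hR'p : IsPGroup p R' := hRp.map _
    have hQR' : Q ≤ R' := by
      intro q hq
      have hqP : (MulAut.conj g).toMonoidHom q ∈ P := hmap ▸ Subgroup.mem_map_of_mem _ hq
      have : (MulAut.conj g⁻¹).toMonoidHom ((MulAut.conj g).toMonoidHom q) ∈ R' :=
        Subgroup.mem_map_of_mem _ (hPR hqP)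
      simpa [MulAut.conj, mul_assoc] using this
    have hR'y : R' ≤ YoungSubgroup f := by
      rintro _ ⟨h, hh, rfl⟩
      intro x
      obtain ⟨⟨pp, hpp⟩, hpx⟩ := hRorb h hh (g x)
      rw [← hmap] at hpp
      obtain ⟨q, hq, hqp⟩ := hpp
      have hpx' : pp (g x) = h (g x) := hpx
      have : (MulAut.conj g⁻¹).toMonoidHom h x = q x := by
        have : (MulAut.conj g⁻¹).toMonoidHom h x = g⁻¹ (h (g x)) := by
          simp [MulAut.conj, Equiv.Perm.mul_apply]
        rw [this, ← hpx', ← hqp]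
        simp [MulAut.conj, Equiv.Perm.mul_apply]
      rw [this]
      exact hQle hq x
    have hRQ : R' = Q := hQmax R' hR'p hR'y hQR'
    refine le_antisymm ?_ hPR
    intro h hh
    have hh' : (MulAut.conj g⁻¹).toMonoidHom h ∈ Q := hRQ ▸ Subgroup.mem_map_of_mem _ hh
    have : (MulAut.conj g).toMonoidHom ((MulAut.conj g⁻¹).toMonoidHom h) ∈ P :=
      hmap ▸ Subgroup.mem_map_of_mem _ hh'
    simpa [MulAut.conj, mul_assoc] using this
  · rintro ⟨-, hmax⟩
    haveI : Fintype (Quotient (MulAction.orbitRel P (Fin n))) := Fintype.ofFinite _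
    let e := Fintype.equivFin (Quotient (MulAction.orbitRel P (Fin n)))
    refine ⟨_, fun x => e (Quotient.mk _ x), P, 1, hP, ?_, ?_, ?_⟩
    · intro h hh x
      exact congrArg e (Quotient.sound ((MulAction.orbitRel_apply).mpr ⟨⟨h, hh⟩, rfl⟩))
    · intro R hRp hRy hPR
      refine hmax R hRp hPR ?_
      intro h hh x
      exact (MulAction.orbitRel_apply).mp (Quotient.exact (e.injective (hRy hh x)))
    · ext h
      simp [Subgroup.mem_map, MulAut.conj]
end

section
/- Let F be a field of characteristic 2 and λ a partition of n with λ ≠ (n). With M_λ the set of nondiagonal nonnegative-integer square matrices of size ℓ(λ) having row and column sums equal to λ, S_λ* = {M ∈ M_λ : M = Mᵗ}, and x_λ = (|M_λ| − |S_λ*|)/2, the dimension of Hom_{FS_n}(F, Λ²M^λ) equals |S_λ*| + x_λ. -/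
namespace St15


open Finset

variable {n ℓ : ℕ} {lam : Fin ℓ → ℕ}

instance : Finite (Tabloid n ℓ lam) := by
  unfold Tabloid; infer_instance

noncomputable instance : Fintype (Tabloid n ℓ lam) := Fintype.ofFinite _

noncomputable instance : LinearOrder (Tabloid n ℓ lam) :=
  LinearOrder.lift' (Fintype.equivFin (Tabloid n ℓ lam)) (Equiv.injective _)

noncomputable instance : DecidableEq (Tabloid n ℓ lam) := Classical.decEq _

@[simp] lemma smul_apply (g : Equiv.Perm (Fin n)) (t : Tabloid n ℓ lam) (x : Fin n) :
    (g • t).1 x = t.1 (g⁻¹ x) := rfl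

lemma smul_injective (g : Equiv.Perm (Fin n)) :
    Function.Injective (fun t : Tabloid n ℓ lam => g • t) :=
  MulAction.injective g

/-- sorted pairs of distinct tabloids -/
def Pr (n ℓ : ℕ) (lam : Fin ℓ → ℕ) : Type :=
  {p : Tabloid n ℓ lam × Tabloid n ℓ lam // p.1 < p.2}

noncomputable instance : Fintype (Pr n ℓ lam) := by unfold Pr; infer_instance

noncomputable def spair (a b : Tabloid n ℓ lam) : Tabloid n ℓ lam × Tabloid n ℓ lam :=
  if a < b then (a, b) else (b, a)

lemma spair_lt {a b : Tabloid n ℓ lam} (h : a ≠ b) : (spair a b).1 < (spair a b).2 := by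
  unfold spair; split
  · assumption
  · exact (h.lt_or_gt).resolve_left (by assumption)

lemma spair_comm {a b : Tabloid n ℓ lam} (h : a ≠ b) : spair a b = spair b a := by
  rcases h.lt_or_gt with h1 | h1 <;>
    simp [spair, h1, not_lt_of_gt h1, if_neg]

noncomputable def act (g : Equiv.Perm (Fin n)) (p : Pr n ℓ lam) : Pr n ℓ lam :=
  ⟨spair (g • p.1.1) (g • p.1.2),
   spair_lt (fun h => (ne_of_lt p.2) (smul_injective g h))⟩

lemma act_one (p : Pr n ℓ lam) : act 1 p = p := by
  apply Subtype.ext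
  show spair ((1 : Equiv.Perm (Fin n)) • p.1.1) ((1 : Equiv.Perm (Fin n)) • p.1.2) = p.1
  rw [one_smul, one_smul, spair, if_pos p.2]

lemma act_act (g h : Equiv.Perm (Fin n)) (p : Pr n ℓ lam) :
    act g (act h p) = act (g * h) p := by
  apply Subtype.ext
  show spair (g • (spair (h • p.1.1) (h • p.1.2)).1) (g • (spair (h • p.1.1) (h • p.1.2)).2)
      = spair ((g * h) • p.1.1) ((g * h) • p.1.2)
  have hne : h • p.1.1 ≠ h • p.1.2 := fun hh => (ne_of_lt p.2) (smul_injective h hh)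
  by_cases hab : h • p.1.1 < h • p.1.2
  · have hsp : spair (h • p.1.1) (h • p.1.2) = (h • p.1.1, h • p.1.2) := by
      rw [spair, if_pos hab]
    rw [hsp]
    simp [mul_smul]
  · have hsp : spair (h • p.1.1) (h • p.1.2) = (h • p.1.2, h • p.1.1) := by
      rw [spair, if_neg hab]
    rw [hsp]
    show spair (g • h • p.1.2) (g • h • p.1.1) = _
    rw [spair_comm (fun hh => hne.symm (smul_injective g hh))]
    simp [mul_smul]

noncomputable instance : DecidableEq (Pr n ℓ lam) := Classical.decEq _

def prel (p q : Pr n ℓ lam) : Prop := ∃ g : Equiv.Perm (Fin n), act g p = q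

def psetoid (n ℓ : ℕ) (lam : Fin ℓ → ℕ) : Setoid (Pr n ℓ lam) where
  r := prel
  iseqv := by
    constructor
    · exact fun p => ⟨1, act_one p⟩
    · rintro p q ⟨g, rfl⟩
      exact ⟨g⁻¹, by rw [act_act, inv_mul_cancel, act_one]⟩
    · rintro p q r ⟨g, rfl⟩ ⟨h, rfl⟩
      exact ⟨h * g, by rw [← act_act]⟩


/-- generic: equal fiber cardinalities gives a permutation intertwining two maps -/
lemma exists_comp_eq {α β : Type*} [Fintype α] [DecidableEq α] [DecidableEq β] {c c' : α → β}
    (h : ∀ b, (univ.filter fun a => c a = b).card = (univ.filter fun a => c' a = b).card) :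
    ∃ g : Equiv.Perm α, ∀ a, c' (g a) = c a := by
  have e : ∀ b, {a // c a = b} ≃ {a // c' a = b} := fun b =>
    Fintype.equivOfCardEq (by rw [Fintype.card_subtype, Fintype.card_subtype]; exact h b)
  refine ⟨(Equiv.sigmaFiberEquiv c).symm.trans
    ((Equiv.sigmaCongrRight e).trans (Equiv.sigmaFiberEquiv c')), fun a => ?_⟩
  have : ((Equiv.sigmaFiberEquiv c).symm.trans
      ((Equiv.sigmaCongrRight e).trans (Equiv.sigmaFiberEquiv c'))) a
      = (e (c a) ⟨a, rfl⟩).1 := rfl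
  rw [this]
  exact (e (c a) ⟨a, rfl⟩).2

/-- generic: a function with prescribed fiber cardinalities exists -/
lemma exists_fun_fibers {α γ : Type*} [Fintype α] [Fintype γ] [DecidableEq γ] (f : γ → ℕ)
    (h : ∑ p, f p = Fintype.card α) :
    ∃ c : α → γ, ∀ p, (univ.filter fun x => c x = p).card = f p := by
  have e : α ≃ Σ p : γ, Fin (f p) :=
    Fintype.equivOfCardEq (by simp [Fintype.card_sigma, h])
  refine ⟨fun x => (e x).1, fun p => ?_⟩
  have h1 : (univ.filter fun x => (e x).1 = p).card = Fintype.card {x : α // (e x).1 = p} :=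
    (Fintype.card_subtype _).symm
  rw [h1]
  have e2 : {x : α // (e x).1 = p} ≃ {y : Σ p : γ, Fin (f p) // y.1 = p} :=
    e.subtypeEquiv (fun a => Iff.rfl)
  have e3 : {y : Σ p : γ, Fin (f p) // y.1 = p} ≃ Fin (f p) :=
    { toFun := fun y => y.2 ▸ y.1.2
      invFun := fun k => ⟨⟨p, k⟩, rfl⟩
      left_inv := by rintro ⟨⟨b, g⟩, rfl⟩; rfl
      right_inv := fun k => rfl }
  rw [Fintype.card_congr (e2.trans e3), Fintype.card_fin]



/-- The intersection matrix of a pair of tabloids. -/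
def mat (t s : Tabloid n ℓ lam) : Matrix (Fin ℓ) (Fin ℓ) ℕ :=
  fun i j => (univ.filter fun x => t.1 x = i ∧ s.1 x = j).card

lemma mat_smul (g : Equiv.Perm (Fin n)) (t s : Tabloid n ℓ lam) :
    mat (g • t) (g • s) = mat t s := by
  funext i j
  show (univ.filter fun x => (g • t).1 x = i ∧ (g • s).1 x = j).card = _
  refine Finset.card_bij' (fun x _ => g⁻¹ x) (fun x _ => g x) ?_ ?_ ?_ ?_ <;>
    simp [smul_apply]

lemma mat_transpose (t s : Tabloid n ℓ lam) : (mat t s).transpose = mat s t := by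
  funext i j
  show mat t s j i = mat s t i j
  unfold mat
  congr 1
  apply Finset.filter_congr
  intro x _
  exact and_comm

lemma mat_row (t s : Tabloid n ℓ lam) (i : Fin ℓ) : ∑ j, mat t s i j = lam i := by
  rw [← t.2 i]
  rw [Finset.card_eq_sum_card_fiberwise (f := fun x => s.1 x)
    (t := univ) (fun x _ => mem_univ _)]
  apply Finset.sum_congr rfl
  intro j _
  rw [Finset.filter_filter]
  rfl

lemma mat_col (t s : Tabloid n ℓ lam) (i : Fin ℓ) : ∑ j, mat t s j i = lam i := by
  rw [← s.2 i]
  rw [Finset.card_eq_sum_card_fiberwise (f := fun x => t.1 x)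
    (t := univ) (fun x _ => mem_univ _)]
  apply Finset.sum_congr rfl
  intro j _
  rw [Finset.filter_filter]
  unfold mat
  congr 1
  apply Finset.filter_congr
  intro x _
  exact and_comm

lemma mat_diag_iff (t s : Tabloid n ℓ lam) :
    (∀ i j, i ≠ j → mat t s i j = 0) ↔ t = s := by
  constructor
  · intro h
    apply Subtype.ext; funext x
    by_contra hx
    have hmem : x ∈ univ.filter fun y => t.1 y = t.1 x ∧ s.1 y = s.1 x := by
      simp
    have : mat t s (t.1 x) (s.1 x) = 0 := h _ _ hx
    rw [mat] at this
    have := Finset.card_pos.mpr ⟨x, hmem⟩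
    omega
  · rintro rfl i j hij
    rw [mat, Finset.card_eq_zero]
    apply Finset.filter_false_of_mem
    rintro x _ ⟨h1, h2⟩
    exact hij (h1 ▸ h2 ▸ rfl)


/-- matrices with row and column sums `lam`, nondiagonal -/
def MT (n ℓ : ℕ) (lam : Fin ℓ → ℕ) : Type :=
  {N : Matrix (Fin ℓ) (Fin ℓ) ℕ //
    (¬ ∀ i j, i ≠ j → N i j = 0) ∧ (∀ i, ∑ j, N i j = lam i) ∧ (∀ i, ∑ j, N j i = lam i)}

/-- the symmetric ones -/
def ST (n ℓ : ℕ) (lam : Fin ℓ → ℕ) : Type :=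
  {N : Matrix (Fin ℓ) (Fin ℓ) ℕ //
    (¬ ∀ i j, i ≠ j → N i j = 0) ∧ (∀ i, ∑ j, N i j = lam i) ∧ (∀ i, ∑ j, N j i = lam i) ∧
    N.transpose = N}

instance : Finite (MT n ℓ lam) := by
  apply Finite.of_injective (β := Fin ℓ → Fin ℓ → Fin (Finset.univ.sup lam + 1))
    (f := fun N i j => ⟨N.1 i j, by
      have h1 : N.1 i j ≤ ∑ k, N.1 i k :=
        Finset.single_le_sum (fun k _ => Nat.zero_le _) (mem_univ j)
      have h2 : lam i ≤ Finset.univ.sup lam := Finset.le_sup (mem_univ i)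
      have h0 := N.2.2.1 i
      omega
      ⟩)
  intro N N' h
  apply Subtype.ext; funext i j
  exact congrArg Fin.val (congrFun (congrFun h i) j)

instance : Finite (ST n ℓ lam) := by
  apply Finite.of_injective (β := MT n ℓ lam)
    (f := fun A => ⟨A.1, A.2.1, A.2.2.1, A.2.2.2.1⟩)
  intro A A' h
  simp only [Subtype.mk.injEq] at h
  exact Subtype.ext (congrArg (fun X : MT n ℓ lam => X.1) h)

noncomputable instance : Fintype (MT n ℓ lam) := Fintype.ofFinite _
noncomputable instance : Fintype (ST n ℓ lam) := Fintype.ofFinite _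

def msetoid (n ℓ : ℕ) (lam : Fin ℓ → ℕ) : Setoid (MT n ℓ lam) where
  r := fun N N' => N'.1 = N.1 ∨ N'.1 = N.1.transpose
  iseqv := by
    constructor
    · exact fun N => Or.inl rfl
    · rintro N N' (h | h)
      · exact Or.inl h.symm
      · exact Or.inr (by rw [h, Matrix.transpose_transpose])
    · rintro N N' N'' (h | h) (h' | h')
      · exact Or.inl (h'.trans h)
      · exact Or.inr (by rw [h', h])
      · exact Or.inr (h'.trans (by rw [h]))
      · exact Or.inl (by rw [h', h, Matrix.transpose_transpose])

noncomputable instance : Fintype (Quotient (msetoid n ℓ lam)) := Fintype.ofFinite _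

noncomputable instance : DecidableEq (Quotient (psetoid n ℓ lam)) := Classical.decEq _

/-- transpose as a map on `MT` -/
def tau (N : MT n ℓ lam) : MT n ℓ lam :=
  ⟨N.1.transpose, by
    obtain ⟨h0, h1, h2⟩ := N.2
    refine ⟨fun h => h0 fun i j hij => ?_, fun i => h2 i, fun i => h1 i⟩
    have := h j i hij.symm
    exact this⟩

lemma tau_eq_iff (N : MT n ℓ lam) : tau N = N ↔ N.1.transpose = N.1 := by
  constructor
  · intro h; exact congrArg Subtype.val h
  · intro h; exact Subtype.ext h

lemma sym_resp {A B : MT n ℓ lam} (h : (msetoid n ℓ lam).r A B) :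
    (tau A = A ↔ tau B = B) := by
  rw [tau_eq_iff, tau_eq_iff]
  rcases h with h | h
  · rw [h]
  · rw [h, Matrix.transpose_transpose]
    constructor
    · intro h'; rw [h']
    · intro h'; rw [← h']

/-- `toM`: the matrix attached to a sorted pair -/
def toM (p : Pr n ℓ lam) : MT n ℓ lam :=
  ⟨mat p.1.1 p.1.2,
    fun h => ne_of_lt p.2 ((mat_diag_iff _ _).1 h), mat_row _ _, mat_col _ _⟩

lemma exists_smul_of_mat_eq {t s t' s' : Tabloid n ℓ lam} (h : mat t' s' = mat t s) :
    ∃ g : Equiv.Perm (Fin n), g • t = t' ∧ g • s = s' := by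
  classical
  have hf : ∀ b : Fin ℓ × Fin ℓ,
      (univ.filter fun a => (t.1 a, s.1 a) = b).card
        = (univ.filter fun a => (t'.1 a, s'.1 a) = b).card := by
    intro b
    have h1 : (univ.filter fun a => (t.1 a, s.1 a) = b).card = mat t s b.1 b.2 := by
      unfold mat; congr 1; apply filter_congr; intro x _; simp [Prod.ext_iff]
    have h2 : (univ.filter fun a => (t'.1 a, s'.1 a) = b).card = mat t' s' b.1 b.2 := by
      unfold mat; congr 1; apply filter_congr; intro x _; simp [Prod.ext_iff]
    rw [h1, h2, h]
  obtain ⟨g, hg⟩ := exists_comp_eq hf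
  refine ⟨g, Subtype.ext (funext fun y => ?_), Subtype.ext (funext fun y => ?_)⟩
  · show t.1 (g⁻¹ y) = t'.1 y
    have h2 := hg (g⁻¹ y)
    rw [show g (g⁻¹ y) = y from g.apply_symm_apply y] at h2
    exact ((Prod.ext_iff.mp h2).1).symm
  · show s.1 (g⁻¹ y) = s'.1 y
    have h2 := hg (g⁻¹ y)
    rw [show g (g⁻¹ y) = y from g.apply_symm_apply y] at h2
    exact ((Prod.ext_iff.mp h2).2).symm

lemma exists_pair_mat (hsum : ∑ i, lam i = n) (N : Matrix (Fin ℓ) (Fin ℓ) ℕ)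
    (h1 : ∀ i, ∑ j, N i j = lam i) (h2 : ∀ i, ∑ j, N j i = lam i) :
    ∃ t s : Tabloid n ℓ lam, mat t s = N := by
  classical
  obtain ⟨c, hc⟩ := exists_fun_fibers (α := Fin n) (fun p : Fin ℓ × Fin ℓ => N p.1 p.2)
    (by rw [Fintype.sum_prod_type]; simp only [h1]; rw [hsum, Fintype.card_fin])
  have key : ∀ i j, (univ.filter fun x => (c x).1 = i ∧ (c x).2 = j).card = N i j := by
    intro i j
    rw [← hc (i, j)]
    congr 1; apply filter_congr; intro x _; simp [Prod.ext_iff]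
  refine ⟨⟨fun x => (c x).1, fun i => ?_⟩, ⟨fun x => (c x).2, fun i => ?_⟩, ?_⟩
  · rw [Finset.card_eq_sum_card_fiberwise (f := fun x => (c x).2)
      (t := univ) (fun x _ => mem_univ _)]
    rw [← h1 i]
    apply Finset.sum_congr rfl
    intro j _
    rw [Finset.filter_filter]
    exact key i j
  · rw [Finset.card_eq_sum_card_fiberwise (f := fun x => (c x).1)
      (t := univ) (fun x _ => mem_univ _)]
    rw [← h2 i]
    apply Finset.sum_congr rfl
    intro j _
    rw [Finset.filter_filter]
    rw [← key j i]
    congr 1; apply filter_congr; intro x _; exact and_comm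
  · funext i j
    exact key i j

lemma descend_aux : ∀ p q : Pr n ℓ lam, (psetoid n ℓ lam).r p q →
    (⟦toM p⟧ : Quotient (msetoid n ℓ lam)) = ⟦toM q⟧ := by
  rintro p q ⟨g, rfl⟩
  apply Quotient.sound
  show (toM (act g p)).1 = (toM p).1 ∨ (toM (act g p)).1 = (toM p).1.transpose
  by_cases hlt : g • p.1.1 < g • p.1.2
  · have hsp : spair (g • p.1.1) (g • p.1.2) = (g • p.1.1, g • p.1.2) := by
      rw [spair, if_pos hlt]
    left
    show mat (spair (g • p.1.1) (g • p.1.2)).1 (spair (g • p.1.1) (g • p.1.2)).2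
        = mat p.1.1 p.1.2
    rw [hsp]
    exact mat_smul g _ _
  · have hsp : spair (g • p.1.1) (g • p.1.2) = (g • p.1.2, g • p.1.1) := by
      rw [spair, if_neg hlt]
    right
    show mat (spair (g • p.1.1) (g • p.1.2)).1 (spair (g • p.1.1) (g • p.1.2)).2
        = (mat p.1.1 p.1.2).transpose
    rw [hsp, mat_transpose]
    exact mat_smul g _ _

noncomputable def descend : Quotient (psetoid n ℓ lam) → Quotient (msetoid n ℓ lam) :=
  Quotient.lift (fun p => ⟦toM p⟧) descend_aux

lemma descend_injective : Function.Injective (descend (n := n) (ℓ := ℓ) (lam := lam)) := by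
  intro O1 O2
  induction O1 using Quotient.ind
  induction O2 using Quotient.ind
  rename_i p q
  intro h
  replace h := Quotient.exact h
  apply Quotient.sound
  rcases h with h | h
  · -- mat q.1.1 q.1.2 = mat p.1.1 p.1.2
    obtain ⟨g, hg1, hg2⟩ := exists_smul_of_mat_eq h
    refine ⟨g, Subtype.ext ?_⟩
    show spair (g • p.1.1) (g • p.1.2) = q.1
    rw [hg1, hg2, spair, if_pos q.2]
  · -- mat q.1.1 q.1.2 = (mat p.1.1 p.1.2)ᵗ = mat p.1.2 p.1.1
    have h' : mat q.1.1 q.1.2 = (mat p.1.1 p.1.2).transpose := h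
    rw [mat_transpose] at h'
    obtain ⟨g, hg1, hg2⟩ := exists_smul_of_mat_eq h'
    refine ⟨g, Subtype.ext ?_⟩
    show spair (g • p.1.1) (g • p.1.2) = q.1
    rw [hg1, hg2, spair_comm (ne_of_lt q.2).symm, spair, if_pos q.2]

lemma descend_surjective (hsum : ∑ i, lam i = n) :
    Function.Surjective (descend (n := n) (ℓ := ℓ) (lam := lam)) := by
  intro O
  induction O using Quotient.ind
  rename_i N
  obtain ⟨t, s, hts⟩ := exists_pair_mat hsum N.1 N.2.2.1 N.2.2.2
  have hne : t ≠ s := by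
    intro h
    exact N.2.1 (hts ▸ (mat_diag_iff t s).2 h)
  refine ⟨⟦⟨spair t s, spair_lt hne⟩⟧, ?_⟩
  show (⟦toM ⟨spair t s, spair_lt hne⟩⟧ : Quotient (msetoid n ℓ lam)) = ⟦N⟧
  apply Quotient.sound
  show N.1 = (toM ⟨spair t s, spair_lt hne⟩).1
      ∨ N.1 = (toM ⟨spair t s, spair_lt hne⟩).1.transpose
  by_cases hlt : t < s
  · have hsp : spair t s = (t, s) := by rw [spair, if_pos hlt]
    left
    show N.1 = mat (spair t s).1 (spair t s).2
    rw [hsp]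
    exact hts.symm
  · have hsp : spair t s = (s, t) := by rw [spair, if_neg hlt]
    right
    show N.1 = (mat (spair t s).1 (spair t s).2).transpose
    rw [hsp]
    show N.1 = (mat s t).transpose
    rw [mat_transpose]
    exact hts.symm


open scoped Classical in
lemma class_filter (N : MT n ℓ lam) :
    (univ.filter fun N' : MT n ℓ lam =>
      (⟦N'⟧ : Quotient (msetoid n ℓ lam)) = ⟦N⟧) = {N, tau N} := by
  ext N'
  simp only [mem_filter, mem_univ, true_and, mem_insert, mem_singleton]
  rw [Quotient.eq]
  show (msetoid n ℓ lam).r N' N ↔ _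
  show (N.1 = N'.1 ∨ N.1 = N'.1.transpose) ↔ _
  constructor
  · rintro (h | h)
    · exact Or.inl (Subtype.ext h.symm)
    · refine Or.inr (Subtype.ext ?_)
      show N'.1 = N.1.transpose
      rw [h, Matrix.transpose_transpose]
  · rintro (rfl | rfl)
    · exact Or.inl rfl
    · refine Or.inr ?_
      show N.1 = N.1.transpose.transpose
      rw [Matrix.transpose_transpose]

open scoped Classical in
lemma class_card (N : MT n ℓ lam) :
    (univ.filter fun N' : MT n ℓ lam =>
      (⟦N'⟧ : Quotient (msetoid n ℓ lam)) = ⟦N⟧).card = if tau N = N then 1 else 2 := by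
  rw [class_filter]
  split
  · rename_i h
    rw [h]
    simp
  · rename_i h
    exact Finset.card_pair (fun hh => h hh.symm)

/-- inclusion of symmetric matrices -/
def inclST (A : ST n ℓ lam) : MT n ℓ lam := ⟨A.1, A.2.1, A.2.2.1, A.2.2.2.1⟩

open scoped Classical in
lemma sym_fiber_card (N : MT n ℓ lam) :
    (univ.filter fun A : ST n ℓ lam =>
      (⟦inclST A⟧ : Quotient (msetoid n ℓ lam)) = ⟦N⟧).card
      = if tau N = N then 1 else 0 := by
  have hmem : ∀ A : ST n ℓ lam,
      ((⟦inclST A⟧ : Quotient (msetoid n ℓ lam)) = ⟦N⟧) ↔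
        (N.1 = A.1 ∨ N.1 = A.1.transpose) := by
    intro A
    rw [Quotient.eq]
    exact Iff.rfl
  split
  · rename_i h
    rw [tau_eq_iff] at h
    rw [Finset.card_eq_one]
    refine ⟨⟨N.1, N.2.1, N.2.2.1, N.2.2.2, h⟩, ?_⟩
    ext A
    simp only [mem_filter, mem_univ, true_and, mem_singleton, hmem]
    constructor
    · rintro (h1 | h1)
      · exact Finset.mem_singleton.mpr (Subtype.ext h1.symm)
      · refine Finset.mem_singleton.mpr (Subtype.ext ?_)
        show A.1 = N.1
        rw [h1, A.2.2.2.2]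
    · intro hA
      obtain rfl := Finset.mem_singleton.mp hA
      exact Or.inl rfl
  · rename_i h
    rw [tau_eq_iff] at h
    rw [Finset.card_eq_zero, Finset.filter_eq_empty_iff]
    intro A _
    rw [hmem]
    rintro (h1 | h1)
    · exact h (by rw [h1, A.2.2.2.2])
    · apply h
      rw [h1, Matrix.transpose_transpose]
      exact A.2.2.2.2.symm

open scoped Classical in
lemma card_mquot (hsum : ∑ i, lam i = n) (sStar xLam mLam : ℕ)
    (hm : mLam = Nat.card (MT n ℓ lam)) (hs : sStar = Nat.card (ST n ℓ lam))
    (hx : 2 * xLam + sStar = mLam) :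
    Nat.card (Quotient (msetoid n ℓ lam)) = sStar + xLam := by
  set Q := Quotient (msetoid n ℓ lam) with hQ
  let pc : Q → Prop := fun c => tau c.out = c.out
  -- m = k + 2 * nk
  have hmc : Fintype.card (MT n ℓ lam)
      = (univ.filter pc).card + 2 * (univ.filter fun c => ¬ pc c).card := by
    rw [← Finset.card_univ,
      Finset.card_eq_sum_card_fiberwise (f := fun N => (⟦N⟧ : Q)) (t := univ)
        (fun x _ => mem_univ _)]
    have : ∀ c : Q, (univ.filter fun N : MT n ℓ lam => (⟦N⟧ : Q) = c).card
        = if pc c then 1 else 2 := by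
      intro c
      conv_lhs => rw [← Quotient.out_eq c]
      exact class_card c.out
    rw [Finset.sum_congr rfl (fun c _ => this c)]
    rw [Finset.sum_ite, Finset.sum_const, Finset.sum_const]
    simp [mul_comm]
  have hsc : Fintype.card (ST n ℓ lam) = (univ.filter pc).card := by
    rw [← Finset.card_univ,
      Finset.card_eq_sum_card_fiberwise (f := fun A => (⟦inclST A⟧ : Q)) (t := univ)
        (fun x _ => mem_univ _)]
    have : ∀ c : Q, (univ.filter fun A : ST n ℓ lam => (⟦inclST A⟧ : Q) = c).card
        = if pc c then 1 else 0 := by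
      intro c
      conv_lhs => rw [← Quotient.out_eq c]
      exact sym_fiber_card c.out
    rw [Finset.sum_congr rfl (fun c _ => this c)]
    rw [Finset.sum_ite, Finset.sum_const, Finset.sum_const]
    simp
  have hqc := Finset.card_filter_add_card_filter_not (s := (univ : Finset Q)) (p := pc)
  rw [Finset.card_univ] at hqc
  rw [Nat.card_eq_fintype_card] at hm hs ⊢
  omega

lemma card_pquot (hsum : ∑ i, lam i = n) (sStar xLam mLam : ℕ)
    (hm : mLam = Nat.card (MT n ℓ lam)) (hs : sStar = Nat.card (ST n ℓ lam))
    (hx : 2 * xLam + sStar = mLam) :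
    Nat.card (Quotient (psetoid n ℓ lam)) = sStar + xLam := by
  rw [Nat.card_eq_of_bijective descend ⟨descend_injective, descend_surjective hsum⟩]
  exact card_mquot hsum sStar xLam mLam hm hs hx


section LinAlg

variable (F : Type*) [Field F] [CharP F 2]

lemma char2_neg {M : Type*} [AddCommGroup M] [Module F M] (v : M) : -v = v := by
  have h2 : (2 : F) = 0 := by
    have := CharP.cast_eq_zero F 2
    exact_mod_cast this
  have hv : v + v = 0 := by
    rw [← two_smul F v, h2, zero_smul]
  exact neg_eq_of_add_eq_zero_left hv

/-- basis vector -/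
noncomputable def eb (t : Tabloid n ℓ lam) : MonoidAlgebra F (Tabloid n ℓ lam) := MonoidAlgebra.single t 1

lemma expand (a : MonoidAlgebra F (Tabloid n ℓ lam)) : a = ∑ t, a.coeff t • eb F t := by
  apply MonoidAlgebra.coeff_injective
  ext u
  rw [MonoidAlgebra.coeff_sum, Finsupp.finset_sum_apply]
  simp only [MonoidAlgebra.coeff_smul, Finsupp.smul_apply, eb, MonoidAlgebra.coeff_single,
    Finsupp.single_apply, smul_eq_mul]
  rw [Finset.sum_eq_single u]
  · simp
  · intro t _ ht
    rw [if_neg ht, mul_zero]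
  · intro h
    exact absurd (mem_univ u) h

lemma eb_apply (t u : Tabloid n ℓ lam) : (eb F t).coeff u = if t = u then 1 else 0 :=
  Finsupp.single_apply

open ExteriorAlgebra in
lemma ι_anticomm (x y : MonoidAlgebra F (Tabloid n ℓ lam)) :
    ι F x * ι F y = -(ι F y * ι F x) := by
  have h := ι_sq_zero (R := F) (x + y)
  rw [map_add, add_mul, mul_add, mul_add, ι_sq_zero, ι_sq_zero] at h
  rw [zero_add, add_zero] at h
  exact eq_neg_of_add_eq_zero_left h

/-- the wedge basis vectors of the exterior square -/
noncomputable def wv (p : Pr n ℓ lam) :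
    ExteriorAlgebra F (MonoidAlgebra F (Tabloid n ℓ lam)) :=
  ExteriorAlgebra.ι F (eb F p.1.1) * ExteriorAlgebra.ι F (eb F p.1.2)

lemma wv_mem (p : Pr n ℓ lam) : wv F p ∈ ⋀[F]^2 (MonoidAlgebra F (Tabloid n ℓ lam)) := by
  have h : (⋀[F]^2 (MonoidAlgebra F (Tabloid n ℓ lam)))
      = LinearMap.range (ExteriorAlgebra.ι F (M := MonoidAlgebra F (Tabloid n ℓ lam)))
        * LinearMap.range (ExteriorAlgebra.ι F) := pow_two _
  rw [h]
  exact Submodule.mul_mem_mul (LinearMap.mem_range_self _ _) (LinearMap.mem_range_self _ _)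

lemma prod_mem_span (x y : MonoidAlgebra F (Tabloid n ℓ lam)) :
    ExteriorAlgebra.ι F x * ExteriorAlgebra.ι F y
      ∈ Submodule.span F (Set.range (wv F (n := n) (ℓ := ℓ) (lam := lam))) := by
  rw [expand F x, expand F y, map_sum, map_sum, Finset.sum_mul]
  refine Submodule.sum_mem _ (fun t _ => ?_)
  rw [Finset.mul_sum]
  refine Submodule.sum_mem _ (fun u _ => ?_)
  rw [map_smul, map_smul, smul_mul_assoc, mul_smul_comm, smul_smul]
  rcases lt_trichotomy t u with h | h | h
  · exact Submodule.smul_mem _ _ (Submodule.subset_span ⟨⟨(t, u), h⟩, rfl⟩)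
  · subst h
    rw [ExteriorAlgebra.ι_sq_zero, smul_zero]
    exact Submodule.zero_mem _
  · rw [ι_anticomm, smul_neg]
    exact Submodule.neg_mem _ (Submodule.smul_mem _ _
      (Submodule.subset_span ⟨⟨(u, t), h⟩, rfl⟩))

lemma span_wv : (⋀[F]^2 (MonoidAlgebra F (Tabloid n ℓ lam)))
    = Submodule.span F (Set.range (wv F (n := n) (ℓ := ℓ) (lam := lam))) := by
  apply le_antisymm
  · have h : (⋀[F]^2 (MonoidAlgebra F (Tabloid n ℓ lam)))
        = LinearMap.range (ExteriorAlgebra.ι F (M := MonoidAlgebra F (Tabloid n ℓ lam)))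
          * LinearMap.range (ExteriorAlgebra.ι F) := pow_two _
    rw [h]
    intro z hz
    refine Submodule.mul_induction_on hz ?_ ?_
    · rintro m ⟨x, rfl⟩ m' ⟨y, rfl⟩
      exact prod_mem_span F x y
    · intro x y hx hy
      exact Submodule.add_mem _ hx hy
  · rw [Submodule.span_le]
    rintro _ ⟨p, rfl⟩
    exact wv_mem F p

/-- coordinate functional -/
noncomputable def lap (a : Tabloid n ℓ lam) : MonoidAlgebra F (Tabloid n ℓ lam) →ₗ[F] F :=
  Finsupp.lapply a ∘ₗ (MonoidAlgebra.coeffLinearEquiv F).toLinearMap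

lemma lap_apply (a : Tabloid n ℓ lam) (x : MonoidAlgebra F (Tabloid n ℓ lam)) :
    lap F a x = x.coeff a := rfl

/-- degree-2 alternating coordinate functional -/
noncomputable def altf (a b : Tabloid n ℓ lam) :
    (MonoidAlgebra F (Tabloid n ℓ lam)) [⋀^Fin 2]→ₗ[F] F where
  toMultilinearMap :=
    (MultilinearMap.mkPiAlgebraFin F 2 F).compLinearMap
      ![lap F a, lap F b]
    - (MultilinearMap.mkPiAlgebraFin F 2 F).compLinearMap
      ![lap F b, lap F a]
  map_eq_zero_of_eq' := by
    intro v i j hv hij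
    have h01 : v 0 = v 1 := by
      fin_cases i <;> fin_cases j <;> first
        | exact absurd rfl hij
        | exact hv
        | exact hv.symm
    show ((MultilinearMap.mkPiAlgebraFin F 2 F).compLinearMap
        ![lap F a, lap F b]
      - (MultilinearMap.mkPiAlgebraFin F 2 F).compLinearMap
        ![lap F b, lap F a]) v = 0
    simp only [MultilinearMap.sub_apply, MultilinearMap.compLinearMap_apply,
      MultilinearMap.mkPiAlgebraFin_apply, List.ofFn_succ, List.ofFn_zero,
      List.prod_cons, List.prod_nil, Matrix.cons_val_zero, Matrix.cons_val_one,
      Matrix.cons_val_succ, Fin.succ_zero_eq_one,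
      Matrix.head_cons, mul_one, lap_apply]
    rw [h01]
    ring

lemma altf_apply (a b : Tabloid n ℓ lam) (v : Fin 2 → (MonoidAlgebra F (Tabloid n ℓ lam))) :
    altf F a b v = (v 0).coeff a * (v 1).coeff b - (v 0).coeff b * (v 1).coeff a := by
  show ((MultilinearMap.mkPiAlgebraFin F 2 F).compLinearMap
      ![lap F a, lap F b]
    - (MultilinearMap.mkPiAlgebraFin F 2 F).compLinearMap
      ![lap F b, lap F a]) v = _
  simp only [MultilinearMap.sub_apply, MultilinearMap.compLinearMap_apply,
    MultilinearMap.mkPiAlgebraFin_apply, List.ofFn_succ, List.ofFn_zero,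
    List.prod_cons, List.prod_nil, Matrix.cons_val_zero, Matrix.cons_val_one,
    Matrix.cons_val_succ, Fin.succ_zero_eq_one,
    Matrix.head_cons, mul_one, lap_apply]

/-- alternating family: `altf` in degree 2, zero elsewhere -/
noncomputable def fam (a b : Tabloid n ℓ lam) :
    ∀ i : ℕ, (MonoidAlgebra F (Tabloid n ℓ lam)) [⋀^Fin i]→ₗ[F] F
  | 2 => altf F a b
  | _ => 0

/-- the separating functionals on the exterior algebra -/
noncomputable def flf (a b : Tabloid n ℓ lam) :
    ExteriorAlgebra F (MonoidAlgebra F (Tabloid n ℓ lam)) →ₗ[F] F :=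
  ExteriorAlgebra.liftAlternating (fam F a b)

lemma flf_mul (a b : Tabloid n ℓ lam) (x y : MonoidAlgebra F (Tabloid n ℓ lam)) :
    flf F a b (ExteriorAlgebra.ι F x * ExteriorAlgebra.ι F y)
      = x.coeff a * y.coeff b - x.coeff b * y.coeff a := by
  rw [flf, ExteriorAlgebra.liftAlternating_ι_mul, ExteriorAlgebra.liftAlternating_ι]
  show (fam F a b 2).curryLeft x ![y] = _
  rw [AlternatingMap.curryLeft_apply_apply]
  show altf F a b _ = _
  rw [altf_apply]
  simp

end LinAlg


section Main

variable (F : Type*) [Field F] [CharP F 2]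

lemma flf_wv (p q : Pr n ℓ lam) :
    flf F p.1.1 p.1.2 (wv F q) = if q = p then 1 else 0 := by
  obtain ⟨⟨a, b⟩, hab⟩ := p
  obtain ⟨⟨c, d⟩, hcd⟩ := q
  show flf F a b (ExteriorAlgebra.ι F (eb F c) * ExteriorAlgebra.ι F (eb F d)) = _
  rw [flf_mul, eb_apply, eb_apply, eb_apply, eb_apply]
  have h2 : (if c = b then (1:F) else 0) * (if d = a then 1 else 0) = 0 := by
    split_ifs with h1' h2'
    · exfalso
      rw [h1', h2'] at hcd
      exact lt_asymm hab hcd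
    all_goals simp
  rw [h2, sub_zero]
  have hqp : ((⟨(c, d), hcd⟩ : Pr n ℓ lam) = ⟨(a, b), hab⟩) ↔ (c = a ∧ d = b) := by
    rw [Subtype.ext_iff, Prod.ext_iff]
  by_cases h : (⟨(c, d), hcd⟩ : Pr n ℓ lam) = ⟨(a, b), hab⟩
  · refine Eq.trans ?_ (if_pos h).symm
    obtain ⟨h1, h2''⟩ := hqp.mp h
    rw [if_pos h1, if_pos h2'', one_mul]
  · refine Eq.trans ?_ (if_neg h).symm
    by_cases h1 : c = a
    · by_cases hd : d = b
      · exact absurd (hqp.mpr ⟨h1, hd⟩) h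
      · rw [if_neg hd, mul_zero]
    · rw [if_neg h1, zero_mul]

lemma li_wv : LinearIndependent F (wv F (n := n) (ℓ := ℓ) (lam := lam)) := by
  rw [Fintype.linearIndependent_iff]
  intro c hc p
  have h := congrArg (flf F p.1.1 p.1.2) hc
  rw [map_sum, map_zero] at h
  simp only [map_smul, flf_wv, smul_eq_mul, mul_ite, mul_one, mul_zero] at h
  rwa [Finset.sum_ite_eq' univ p (fun x => c x), if_pos (mem_univ p)] at h

lemma rep_eb (g : Equiv.Perm (Fin n)) (t : Tabloid n ℓ lam) :
    (Representation.ofMulAction F (Equiv.Perm (Fin n)) (Tabloid n ℓ lam)) g (eb F t)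
      = eb F (g • t) :=
  Representation.ofMulAction_single (k := F) (G := Equiv.Perm (Fin n))
    (H := Tabloid n ℓ lam) g t 1

lemma rep_wv (g : Equiv.Perm (Fin n)) (p : Pr n ℓ lam) :
    (extAlgRep (Representation.ofMulAction F (Equiv.Perm (Fin n)) (Tabloid n ℓ lam))) g
      (wv F p) = wv F (act g p) := by
  set ρ := Representation.ofMulAction F (Equiv.Perm (Fin n)) (Tabloid n ℓ lam) with hρ
  show (ExteriorAlgebra.map (ρ g)).toLinearMap
      (ExteriorAlgebra.ι F (eb F p.1.1) * ExteriorAlgebra.ι F (eb F p.1.2)) = _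
  rw [AlgHom.toLinearMap_apply, map_mul, ExteriorAlgebra.map_apply_ι,
    ExteriorAlgebra.map_apply_ι, rep_eb, rep_eb]
  by_cases hlt : g • p.1.1 < g • p.1.2
  · have hsp : spair (g • p.1.1) (g • p.1.2) = (g • p.1.1, g • p.1.2) := by
      rw [spair, if_pos hlt]
    show _ = ExteriorAlgebra.ι F (eb F (spair (g • p.1.1) (g • p.1.2)).1)
        * ExteriorAlgebra.ι F (eb F (spair (g • p.1.1) (g • p.1.2)).2)
    rw [hsp]
  · have hsp : spair (g • p.1.1) (g • p.1.2) = (g • p.1.2, g • p.1.1) := by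
      rw [spair, if_neg hlt]
    show _ = ExteriorAlgebra.ι F (eb F (spair (g • p.1.1) (g • p.1.2)).1)
        * ExteriorAlgebra.ι F (eb F (spair (g • p.1.1) (g • p.1.2)).2)
    rw [hsp]
    show ExteriorAlgebra.ι F (eb F (g • p.1.1)) * ExteriorAlgebra.ι F (eb F (g • p.1.2))
        = ExteriorAlgebra.ι F (eb F (g • p.1.2)) * ExteriorAlgebra.ι F (eb F (g • p.1.1))
    rw [ι_anticomm F, char2_neg F]

/-- the permutation `act g` as an equivalence -/
noncomputable def actE (g : Equiv.Perm (Fin n)) : Pr n ℓ lam ≃ Pr n ℓ lam where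
  toFun := act g
  invFun := act g⁻¹
  left_inv := fun p => by rw [act_act, inv_mul_cancel, act_one]
  right_inv := fun p => by rw [act_act, mul_inv_cancel, act_one]

open scoped Classical in
/-- orbit sums -/
noncomputable def uo (O : Quotient (psetoid n ℓ lam)) :
    ExteriorAlgebra F (MonoidAlgebra F (Tabloid n ℓ lam)) :=
  ∑ p ∈ univ.filter (fun p : Pr n ℓ lam => (⟦p⟧ : Quotient (psetoid n ℓ lam)) = O), wv F p

open scoped Classical in
lemma flf_uo (O O' : Quotient (psetoid n ℓ lam)) :
    flf F O.out.1.1 O.out.1.2 (uo F O') = if O = O' then 1 else 0 := by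
  rw [uo, map_sum]
  simp only [flf_wv]
  rw [Finset.sum_ite_eq' (univ.filter fun p : Pr n ℓ lam =>
    (⟦p⟧ : Quotient (psetoid n ℓ lam)) = O') O.out (fun _ => (1 : F))]
  by_cases hO : O = O'
  · subst hO
    simp [Quotient.out_eq]
  · simp [Quotient.out_eq, hO]

end Main


section Final

variable (F : Type*) [Field F] [CharP F 2]

noncomputable instance : Fintype (Quotient (psetoid n ℓ lam)) := Fintype.ofFinite _

lemma li_uo : LinearIndependent F (uo F (n := n) (ℓ := ℓ) (lam := lam)) := by
  rw [Fintype.linearIndependent_iff]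
  intro c hc O
  have h := congrArg (flf F O.out.1.1 O.out.1.2) hc
  rw [map_sum, map_zero] at h
  simp only [map_smul, flf_uo, smul_eq_mul, mul_ite, mul_one, mul_zero] at h
  rwa [Finset.sum_ite_eq univ O (fun x => c x), if_pos (mem_univ O)] at h

open scoped Classical in
lemma uo_mem_ext (O : Quotient (psetoid n ℓ lam)) :
    uo F O ∈ ⋀[F]^2 (MonoidAlgebra F (Tabloid n ℓ lam)) :=
  Submodule.sum_mem _ (fun p _ => wv_mem F p)

open scoped Classical in
lemma uo_invariant (g : Equiv.Perm (Fin n)) (O : Quotient (psetoid n ℓ lam)) :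
    (extAlgRep (Representation.ofMulAction F (Equiv.Perm (Fin n)) (Tabloid n ℓ lam))) g
      (uo F O) = uo F O := by
  rw [uo, map_sum]
  simp only [rep_wv]
  refine Finset.sum_equiv (actE g) (fun p => ?_) (fun p _ => rfl)
  simp only [mem_filter, mem_univ, true_and]
  have hq : (⟦(actE g) p⟧ : Quotient (psetoid n ℓ lam)) = ⟦p⟧ :=
    Quotient.sound ⟨g⁻¹, by
      show act g⁻¹ (act g p) = p
      rw [act_act, inv_mul_cancel, act_one]⟩
  rw [hq]

end Final

end St15

open St15 Finset in
/-- Let `F` be a field of characteristic `2` and `λ ⊢ n`, `λ ≠ (n)`.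
With `M_λ` the set of nondiagonal matrices with row and column sums `λ`,
`S_λ* = {M ∈ M_λ : M = Mᵗ}` and `x_λ = (|M_λ| − |S_λ*|)/2`, the dimension of the space
of `S_n`-invariant vectors in the exterior square `Λ²M^λ` equals `|S_λ*| + x_λ`. -/
theorem statement15 {F : Type*} [Field F] [CharP F 2]
    (n ℓ : ℕ) (lam : Fin ℓ → ℕ) (hℓ : 2 ≤ ℓ)
    (hpart : ∀ i j : Fin ℓ, i ≤ j → lam j ≤ lam i) (hpos : ∀ i, 0 < lam i)
    (hsum : ∑ i, lam i = n)
    (sStar xLam mLam : ℕ)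
    (hm : mLam = Nat.card {N : Matrix (Fin ℓ) (Fin ℓ) ℕ //
      (¬ ∀ i j, i ≠ j → N i j = 0) ∧ (∀ i, ∑ j, N i j = lam i) ∧ (∀ i, ∑ j, N j i = lam i)})
    (hs : sStar = Nat.card {N : Matrix (Fin ℓ) (Fin ℓ) ℕ //
      (¬ ∀ i j, i ≠ j → N i j = 0) ∧ (∀ i, ∑ j, N i j = lam i) ∧ (∀ i, ∑ j, N j i = lam i) ∧
      N.transpose = N})
    (hx : 2 * xLam + sStar = mLam) :
    Module.finrank F
      ((⋀[F]^2 (MonoidAlgebra F (Tabloid n ℓ lam))) ⊓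
        (extAlgRep (Representation.ofMulAction F (Equiv.Perm (Fin n)) (Tabloid n ℓ lam))).invariants :
        Submodule F (ExteriorAlgebra F (MonoidAlgebra F (Tabloid n ℓ lam)))) = sStar + xLam := by
  classical
  have hW : ((⋀[F]^2 (MonoidAlgebra F (Tabloid n ℓ lam))) ⊓
      (extAlgRep (Representation.ofMulAction F (Equiv.Perm (Fin n)) (Tabloid n ℓ lam))).invariants :
      Submodule F (ExteriorAlgebra F (MonoidAlgebra F (Tabloid n ℓ lam))))
      = Submodule.span F (Set.range (uo F (n := n) (ℓ := ℓ) (lam := lam))) := by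
    apply le_antisymm
    · intro z hz
      obtain ⟨hz2, hzinv⟩ := Submodule.mem_inf.mp hz
      rw [span_wv F] at hz2
      obtain ⟨c, hc⟩ := (Submodule.mem_span_range_iff_exists_fun F).mp hz2
      rw [Representation.mem_invariants] at hzinv
      have hcinv0 : ∀ (g : Equiv.Perm (Fin n)) (q : Pr n ℓ lam),
          c (act g⁻¹ q) = c q := by
        intro g q
        have e2 : (extAlgRep (Representation.ofMulAction F (Equiv.Perm (Fin n))
            (Tabloid n ℓ lam))) g z = ∑ q', c (act g⁻¹ q') • wv F q' := by
          rw [← hc, map_sum]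
          simp only [map_smul, rep_wv]
          rw [← Equiv.sum_comp (actE g) (fun q' => c (act g⁻¹ q') • wv F q')]
          apply Finset.sum_congr rfl
          intro p _
          have h1 : act g⁻¹ ((actE g) p) = p := by
            show act g⁻¹ (act g p) = p
            rw [act_act, inv_mul_cancel, act_one]
          rw [h1]
          rfl
        have e3 : ∑ q', c (act g⁻¹ q') • wv F q' = ∑ q', c q' • wv F q' := by
          rw [← e2, hzinv g, ← hc]
        have e4 : ∑ q', (c (act g⁻¹ q') - c q') • wv F q' = 0 := by
          simp only [sub_smul]
          rw [Finset.sum_sub_distrib, e3, sub_self]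
        have := Fintype.linearIndependent_iff.mp (li_wv F) _ e4 q
        have h5 : c (act g⁻¹ q) - c q = 0 := this
        exact sub_eq_zero.mp h5
      have hcinv : ∀ (g : Equiv.Perm (Fin n)) (q : Pr n ℓ lam),
          c (act g q) = c q := fun g q => by
        have := hcinv0 g⁻¹ q
        rwa [inv_inv] at this
      rw [← hc,
        ← Finset.sum_fiberwise univ (fun p : Pr n ℓ lam =>
          (⟦p⟧ : Quotient (psetoid n ℓ lam))) (fun p => c p • wv F p)]
      apply Submodule.sum_mem
      intro O _
      have hgrp : ∑ p ∈ univ.filter (fun p : Pr n ℓ lam =>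
          (⟦p⟧ : Quotient (psetoid n ℓ lam)) = O), c p • wv F p
          = c O.out • uo F O := by
        rw [uo, Finset.smul_sum]
        apply Finset.sum_congr rfl
        intro p hp
        have hpO : (⟦p⟧ : Quotient (psetoid n ℓ lam)) = O := (mem_filter.mp hp).2
        have hrel : (psetoid n ℓ lam).r O.out p :=
          Quotient.exact ((Quotient.out_eq O).trans hpO.symm)
        obtain ⟨g, hg⟩ := hrel
        rw [← hg, hcinv g O.out]
      rw [hgrp]
      exact Submodule.smul_mem _ _ (Submodule.subset_span ⟨O, rfl⟩)
    · rw [Submodule.span_le]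
      rintro _ ⟨O, rfl⟩
      refine Submodule.mem_inf.mpr ⟨uo_mem_ext F O, ?_⟩
      rw [Representation.mem_invariants]
      intro g
      exact uo_invariant F g O
  rw [hW, finrank_span_eq_card (li_uo F), ← Nat.card_eq_fintype_card]
  exact card_pquot hsum sStar xLam mLam hm hs hx
end

section
/- Let λ be a partition of n with λ ≠ (n), and let g, g' be representatives of nontrivial (S_λ, S_λ)-double cosets in S_n, with corresponding matrices M = (|n_i^λ ∩ g n_j^λ|) and M' = (|n_i^λ ∩ g' n_j^λ|). If M' = Mᵗ, then there exists x ∈ S_n such that x({t^λ} ∧ g{t^λ}) = −({t^λ} ∧ g'{t^λ}) in Λ²M^λ, where {t^λ} is the standard λ-tabloid; in particular the two wedges generate the same FS_n-submodule of Λ²M^λ. -/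
/-- The `i`-th consecutive block `n_i^λ` of `{1,…,n}` determined by a partition `λ`. -/
def lamBlock (n ℓ : ℕ) (lam : Fin ℓ → ℕ) (i : Fin ℓ) : Finset (Fin n) :=
  Finset.univ.filter (fun x : Fin n =>
    (∑ j ∈ Finset.univ.filter (fun j : Fin ℓ => j < i), lam j) ≤ (x : ℕ) ∧
    (x : ℕ) < (∑ j ∈ Finset.univ.filter (fun j : Fin ℓ => j < i), lam j) + lam i)

lemma exists_perm_comp' {α β : Type*} [Fintype α] [DecidableEq α] [DecidableEq β]
    (f₁ f₂ : α → β)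
    (h : ∀ b, (Finset.univ.filter fun a => f₁ a = b).card =
      (Finset.univ.filter fun a => f₂ a = b).card) :
    ∃ x : Equiv.Perm α, ∀ a, f₂ (x a) = f₁ a := by
  have e : ∀ b, {a // f₁ a = b} ≃ {a // f₂ a = b} := fun b =>
    Fintype.equivOfCardEq (by
      simp only [Fintype.card_subtype]
      exact h b)
  exact ⟨Equiv.ofFiberEquiv e, fun a => Equiv.ofFiberEquiv_map e a⟩

/-- Let `λ ⊢ n`, `λ ≠ (n)`, let `t₀ = {t^λ}` be the standard tabloid
(whose `i`-th row is `n_i^λ`), and let `g, g'` represent nontrivial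
`(S_λ, S_λ)`-double cosets with matrices `M = (|n_i^λ ∩ g n_j^λ|)` and
`M' = (|n_i^λ ∩ g' n_j^λ|)`.  If `M' = Mᵗ`, then some `x ∈ S_n` sends the wedge
`{t^λ} ∧ g{t^λ}` to `−({t^λ} ∧ g'{t^λ})` in `Λ²M^λ`; in particular the two wedges
generate the same `FS_n`-submodule. -/
theorem statement17 {p : ℕ} [Fact p.Prime] {F : Type*} [Field F] [CharP F p]
    (n ℓ : ℕ) (lam : Fin ℓ → ℕ) (hℓ : 2 ≤ ℓ)
    (hpart : ∀ i j : Fin ℓ, i ≤ j → lam j ≤ lam i) (hpos : ∀ i, 0 < lam i)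
    (hsum : ∑ i, lam i = n)
    (t0 : Tabloid n ℓ lam) (ht0 : ∀ (x : Fin n) (i : Fin ℓ), t0.1 x = i ↔ x ∈ lamBlock n ℓ lam i)
    (g g' : Equiv.Perm (Fin n)) (hg : g • t0 ≠ t0) (hg' : g' • t0 ≠ t0)
    (hMt : ∀ i j, (lamBlock n ℓ lam i ∩ (lamBlock n ℓ lam j).image g').card =
      (lamBlock n ℓ lam j ∩ (lamBlock n ℓ lam i).image g).card) :
    ∃ x : Equiv.Perm (Fin n),
      extAlgRep (Representation.ofMulAction F (Equiv.Perm (Fin n)) (Tabloid n ℓ lam)) x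
        (ExteriorAlgebra.ιMulti F 2
          ![MonoidAlgebra.single t0 (1 : F), MonoidAlgebra.single (g • t0) 1]) =
      - ExteriorAlgebra.ιMulti F 2
          ![MonoidAlgebra.single t0 (1 : F), MonoidAlgebra.single (g' • t0) 1] ∧
    Submodule.span F (Set.range fun h : Equiv.Perm (Fin n) =>
      extAlgRep (Representation.ofMulAction F (Equiv.Perm (Fin n)) (Tabloid n ℓ lam)) h
        (ExteriorAlgebra.ιMulti F 2
          ![MonoidAlgebra.single t0 (1 : F), MonoidAlgebra.single (g • t0) 1])) =
    Submodule.span F (Set.range fun h : Equiv.Perm (Fin n) =>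
      extAlgRep (Representation.ofMulAction F (Equiv.Perm (Fin n)) (Tabloid n ℓ lam)) h
        (ExteriorAlgebra.ιMulti F 2
          ![MonoidAlgebra.single t0 (1 : F), MonoidAlgebra.single (g' • t0) 1])) := by
  classical
  set ρ := Representation.ofMulAction F (Equiv.Perm (Fin n)) (Tabloid n ℓ lam) with hρ
  -- the two pairs of tabloids have the same intersection matrix
  have key : ∀ b : Fin ℓ × Fin ℓ,
      (Finset.univ.filter fun a : Fin n => (t0.1 a, t0.1 (g⁻¹ a)) = b).card =
      (Finset.univ.filter fun a : Fin n => (t0.1 (g'⁻¹ a), t0.1 a) = b).card := by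
    rintro ⟨i, j⟩
    have h1 : (Finset.univ.filter fun a : Fin n => (t0.1 a, t0.1 (g⁻¹ a)) = (i, j)) =
        lamBlock n ℓ lam i ∩ (lamBlock n ℓ lam j).image g := by
      ext a
      simp only [Finset.mem_filter, Finset.mem_univ, true_and, Prod.mk.injEq,
        Finset.mem_inter, Finset.mem_image, ht0]
      constructor
      · rintro ⟨h₁, h₂⟩
        exact ⟨h₁, g⁻¹ a, h₂, by simp⟩
      · rintro ⟨h₁, b, hb, rfl⟩
        exact ⟨h₁, by simpa using hb⟩
    have h2 : (Finset.univ.filter fun a : Fin n => (t0.1 (g'⁻¹ a), t0.1 a) = (i, j)) =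
        lamBlock n ℓ lam j ∩ (lamBlock n ℓ lam i).image g' := by
      ext a
      simp only [Finset.mem_filter, Finset.mem_univ, true_and, Prod.mk.injEq,
        Finset.mem_inter, Finset.mem_image, ht0]
      constructor
      · rintro ⟨h₁, h₂⟩
        exact ⟨h₂, g'⁻¹ a, h₁, by simp⟩
      · rintro ⟨h₂, b, hb, rfl⟩
        exact ⟨by simpa using hb, h₂⟩
    rw [h1, h2, hMt j i]
  obtain ⟨x, hx⟩ := exists_perm_comp'
    (fun a : Fin n => (t0.1 a, t0.1 (g⁻¹ a)))
    (fun a : Fin n => (t0.1 (g'⁻¹ a), t0.1 a)) key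
  -- x sends t0 to g' • t0 and g • t0 to t0
  have hx1 : x • t0 = g' • t0 := by
    apply Subtype.ext
    funext b
    have := congrArg Prod.fst (hx (x⁻¹ b))
    show t0.1 (x⁻¹ b) = t0.1 (g'⁻¹ b)
    simpa using this.symm
  have hx2 : x • (g • t0) = t0 := by
    apply Subtype.ext
    funext b
    have := congrArg Prod.snd (hx (x⁻¹ b))
    show t0.1 (g⁻¹ (x⁻¹ b)) = t0.1 b
    simpa using this.symm
  -- action on wedges
  have hact : ∀ (h : Equiv.Perm (Fin n)) (t s : Tabloid n ℓ lam),
      extAlgRep ρ h (ExteriorAlgebra.ιMulti F 2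
        ![MonoidAlgebra.single t (1 : F), MonoidAlgebra.single s 1]) =
      ExteriorAlgebra.ιMulti F 2
        ![MonoidAlgebra.single (h • t) (1 : F), MonoidAlgebra.single (h • s) 1] := by
    intro h t s
    show (ExteriorAlgebra.map (ρ h)).toLinearMap _ = _
    rw [AlgHom.toLinearMap_apply, ExteriorAlgebra.map_apply_ιMulti]
    congr 1
    funext i
    fin_cases i <;>
      simp [hρ, Representation.ofMulAction_single]
  -- swapping the two factors negates the wedge
  have hswap : ∀ v w : MonoidAlgebra F (Tabloid n ℓ lam),
      ExteriorAlgebra.ιMulti F 2 ![w, v] = - ExteriorAlgebra.ιMulti F 2 ![v, w] := by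
    intro v w
    have h01 : ((0 : Fin 2) : Fin 2) ≠ 1 := by decide
    have := (ExteriorAlgebra.ιMulti F 2 (M := MonoidAlgebra F (Tabloid n ℓ lam))).map_swap
      (v := ![v, w]) h01
    have hcomp : (![v, w] ∘ Equiv.swap (0 : Fin 2) 1) = ![w, v] := by
      funext i
      fin_cases i <;> simp
    rwa [hcomp] at this
  have hmain : extAlgRep ρ x (ExteriorAlgebra.ιMulti F 2
        ![MonoidAlgebra.single t0 (1 : F), MonoidAlgebra.single (g • t0) 1]) =
      - ExteriorAlgebra.ιMulti F 2
        ![MonoidAlgebra.single t0 (1 : F), MonoidAlgebra.single (g' • t0) 1] := by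
    rw [hact, hx1, hx2, hswap]
  refine ⟨x, hmain, ?_⟩
  -- spans coincide
  set w1 := ExteriorAlgebra.ιMulti F 2
    ![MonoidAlgebra.single t0 (1 : F), MonoidAlgebra.single (g • t0) 1] with hw1
  set w2 := ExteriorAlgebra.ιMulti F 2
    ![MonoidAlgebra.single t0 (1 : F), MonoidAlgebra.single (g' • t0) 1] with hw2
  have hmul : ∀ (a b : Equiv.Perm (Fin n)) (v : ExteriorAlgebra F (MonoidAlgebra F (Tabloid n ℓ lam))),
      extAlgRep ρ a (extAlgRep ρ b v) = extAlgRep ρ (a * b) v := by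
    intro a b v
    rw [map_mul]
    rfl
  apply le_antisymm
  · rw [Submodule.span_le]
    rintro _ ⟨h, rfl⟩
    have : extAlgRep ρ h w1 = - extAlgRep ρ (h * x⁻¹) w2 := by
      have h2 : extAlgRep ρ (h * x⁻¹) (extAlgRep ρ x w1) = extAlgRep ρ h w1 := by
        rw [hmul]
        congr 1
        group
      rw [← h2, hmain, map_neg]
    simp only [this]
    exact neg_mem (Submodule.subset_span ⟨h * x⁻¹, rfl⟩)
  · rw [Submodule.span_le]
    rintro _ ⟨h, rfl⟩
    have : extAlgRep ρ h w2 = - extAlgRep ρ (h * x) w1 := by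
      rw [← hmul, hmain, map_neg, neg_neg]
    simp only [this]
    exact neg_mem (Submodule.subset_span ⟨h * x, rfl⟩)
end

section
/- Let λ be a partition of n with λ ≠ (n), g a representative of a nontrivial (S_λ, S_λ)-double coset, M = (|n_i^λ ∩ g n_j^λ|) the associated matrix, and L the stabilizer in S_n of the unordered pair {{t^λ}, g{t^λ}} of λ-tabloids. Then L = (R({t^λ}) ∩ R(g{t^λ})) ⋊ ⟨z⟩ for some involution z ∈ S_n (acting by swapping the two tabloids) if and only if M = Mᵗ. Moreover, when M = Mᵗ one may take z to be the involution swapping n_i^λ ∩ g n_j^λ with n_j^λ ∩ g n_i^λ for all i < j and fixing everything else. -/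
/-- `PairDecomp u v z` says that `z` is an involution swapping the tabloids `u, v` and
that the stabilizer `L` of the unordered pair `{u, v}` decomposes as the (internal)
semidirect product `(R(u) ∩ R(v)) ⋊ ⟨z⟩`: `z` normalizes `R(u) ∩ R(v)` and every
element of `L` lies in `R(u) ∩ R(v)` or in `(R(u) ∩ R(v))·z`. -/
def PairDecomp {n ℓ : ℕ} {lam : Fin ℓ → ℕ} (u v : Tabloid n ℓ lam)
    (z : Equiv.Perm (Fin n)) : Prop :=
  z * z = 1 ∧ z • u = v ∧ z • v = u ∧
  (∀ r : Equiv.Perm (Fin n), r • u = u → r • v = v →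
    (z * r * z⁻¹) • u = u ∧ (z * r * z⁻¹) • v = v) ∧
  (∀ h : Equiv.Perm (Fin n),
    ((h • u = u ∧ h • v = v) ∨ (h • u = v ∧ h • v = u)) ↔
    ((h • u = u ∧ h • v = v) ∨
      ∃ r : Equiv.Perm (Fin n), r • u = u ∧ r • v = v ∧ h = r * z))


section Core
variable {n ℓ : ℕ} (a b : Fin n → Fin ℓ)

def CardCond : Prop := ∀ i j : Fin ℓ,
  (Finset.univ.filter fun x => a x = i ∧ b x = j).card =
  (Finset.univ.filter fun x => a x = j ∧ b x = i).card

noncomputable def swapEquiv (h : CardCond a b) (i j : Fin ℓ) :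
    {x : Fin n // a x = i ∧ b x = j} ≃ {x : Fin n // a x = j ∧ b x = i} :=
  Fintype.equivOfCardEq (by simpa [Fintype.card_subtype] using h i j)

noncomputable def swapFun (h : CardCond a b) : Fin n → Fin n := fun x =>
  if a x < b x then (swapEquiv a b h (a x) (b x) ⟨x, rfl, rfl⟩).1
  else if b x < a x then ((swapEquiv a b h (b x) (a x)).symm ⟨x, rfl, rfl⟩).1
  else x

lemma swapEquiv_congr (h : CardCond a b) {i j i' j' : Fin ℓ} (h1 : i = i') (h2 : j = j')
    (y : Fin n) (p : a y = i ∧ b y = j) (p' : a y = i' ∧ b y = j') :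
    (swapEquiv a b h i j ⟨y, p⟩).1 = (swapEquiv a b h i' j' ⟨y, p'⟩).1 := by
  subst h1; subst h2; rfl

lemma swapEquiv_symm_congr (h : CardCond a b) {i j i' j' : Fin ℓ} (h1 : i = i') (h2 : j = j')
    (y : Fin n) (p : a y = j ∧ b y = i) (p' : a y = j' ∧ b y = i') :
    ((swapEquiv a b h i j).symm ⟨y, p⟩).1 = ((swapEquiv a b h i' j').symm ⟨y, p'⟩).1 := by
  subst h1; subst h2; rfl

lemma swapFun_key (h : CardCond a b) (x : Fin n) :
    a (swapFun a b h x) = b x ∧ b (swapFun a b h x) = a x := by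
  unfold swapFun
  split_ifs with h1 h2
  · exact (swapEquiv a b h (a x) (b x) ⟨x, rfl, rfl⟩).2
  · exact ((swapEquiv a b h (b x) (a x)).symm ⟨x, rfl, rfl⟩).2
  · have : a x = b x := le_antisymm (not_lt.mp h2) (not_lt.mp h1)
    exact ⟨this, this.symm⟩

lemma swapFun_fix (h : CardCond a b) (x : Fin n) (e : a x = b x) : swapFun a b h x = x := by
  unfold swapFun
  rw [if_neg (by simp [e]), if_neg (by simp [e])]

lemma swapFun_invol (h : CardCond a b) : Function.Involutive (swapFun a b h) := by
  intro x
  rcases lt_trichotomy (a x) (b x) with h1 | h1 | h1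
  · have hx1 : swapFun a b h x = (swapEquiv a b h (a x) (b x) ⟨x, rfl, rfl⟩).1 := by
      unfold swapFun; rw [if_pos h1]
    set y := swapEquiv a b h (a x) (b x) ⟨x, rfl, rfl⟩ with hy
    have hy2 := y.2
    have hlt : b y.1 < a y.1 := by rw [hy2.1, hy2.2]; exact h1
    have : swapFun a b h y.1 = ((swapEquiv a b h (b y.1) (a y.1)).symm ⟨y.1, rfl, rfl⟩).1 := by
      unfold swapFun; rw [if_neg (not_lt.mpr hlt.le), if_pos hlt]
    rw [hx1, this, swapEquiv_symm_congr a b h hy2.2 hy2.1 y.1 ⟨rfl, rfl⟩ hy2]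
    have he : (⟨y.1, hy2⟩ : {z : Fin n // a z = b x ∧ b z = a x}) = y := rfl
    rw [he, hy, Equiv.symm_apply_apply]
  · rw [swapFun_fix a b h x h1, swapFun_fix a b h x h1]
  · have hx1 : swapFun a b h x = ((swapEquiv a b h (b x) (a x)).symm ⟨x, rfl, rfl⟩).1 := by
      unfold swapFun; rw [if_neg (not_lt.mpr h1.le), if_pos h1]
    set y := (swapEquiv a b h (b x) (a x)).symm ⟨x, rfl, rfl⟩ with hy
    have hy2 := y.2
    have hlt : a y.1 < b y.1 := by rw [hy2.1, hy2.2]; exact h1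
    have : swapFun a b h y.1 = (swapEquiv a b h (a y.1) (b y.1) ⟨y.1, rfl, rfl⟩).1 := by
      unfold swapFun; rw [if_pos hlt]
    rw [hx1, this, swapEquiv_congr a b h hy2.1 hy2.2 y.1 ⟨rfl, rfl⟩ hy2]
    have he : (⟨y.1, hy2⟩ : {z : Fin n // a z = b x ∧ b z = a x}) = y := rfl
    rw [he, hy, Equiv.apply_symm_apply]

lemma core_exists (h : CardCond a b) :
    ∃ z : Equiv.Perm (Fin n), z * z = 1 ∧ (∀ x, a (z x) = b x ∧ b (z x) = a x) ∧
      (∀ x, a x = b x → z x = x) := by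
  refine ⟨(swapFun_invol a b h).toPerm, ?_, fun x => swapFun_key a b h x,
    fun x e => swapFun_fix a b h x e⟩
  ext x
  simp only [Equiv.Perm.mul_apply, Function.Involutive.coe_toPerm, Equiv.Perm.one_apply]
  exact congrArg Fin.val (swapFun_invol a b h x)

end Core

/-- Let `λ ⊢ n`, `λ ≠ (n)`, `t₀ = {t^λ}` the standard tabloid, `g` a
representative of a nontrivial `(S_λ, S_λ)`-double coset with matrix
`M = (|n_i^λ ∩ g n_j^λ|)`, and `L` the stabilizer of the unordered pair
`{{t^λ}, g{t^λ}}`.  Then `L = (R({t^λ}) ∩ R(g{t^λ})) ⋊ ⟨z⟩` for some involution `z`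
swapping the two tabloids iff `M = Mᵗ`; moreover, when `M = Mᵗ` one may take `z` to be
the involution swapping `n_i^λ ∩ g n_j^λ` with `n_j^λ ∩ g n_i^λ` for all `i ≠ j` and
fixing everything else. -/
theorem statement18 (n ℓ : ℕ) (lam : Fin ℓ → ℕ) (hℓ : 2 ≤ ℓ)
    (hpart : ∀ i j : Fin ℓ, i ≤ j → lam j ≤ lam i) (hpos : ∀ i, 0 < lam i)
    (hsum : ∑ i, lam i = n)
    (t0 : Tabloid n ℓ lam) (ht0 : ∀ (x : Fin n) (i : Fin ℓ), t0.1 x = i ↔ x ∈ lamBlock n ℓ lam i)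
    (g : Equiv.Perm (Fin n)) (hg : g • t0 ≠ t0) :
    ((∃ z : Equiv.Perm (Fin n), PairDecomp t0 (g • t0) z) ↔
      (∀ i j, (lamBlock n ℓ lam i ∩ (lamBlock n ℓ lam j).image g).card =
        (lamBlock n ℓ lam j ∩ (lamBlock n ℓ lam i).image g).card)) ∧
    ((∀ i j, (lamBlock n ℓ lam i ∩ (lamBlock n ℓ lam j).image g).card =
        (lamBlock n ℓ lam j ∩ (lamBlock n ℓ lam i).image g).card) →
      ∃ z : Equiv.Perm (Fin n), PairDecomp t0 (g • t0) z ∧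
        (∀ x : Fin n, t0.1 x = (g • t0).1 x → z x = x) ∧
        (∀ x : Fin n, t0.1 (z x) = (g • t0).1 x ∧ (g • t0).1 (z x) = t0.1 x)) := by
  classical
  have hblock : ∀ i j : Fin ℓ, lamBlock n ℓ lam i ∩ (lamBlock n ℓ lam j).image g
      = Finset.univ.filter (fun x => t0.1 x = i ∧ (g • t0).1 x = j) := by
    intro i j
    ext x
    simp only [Finset.mem_inter, Finset.mem_image, Finset.mem_filter, Finset.mem_univ, true_and]
    constructor
    · rintro ⟨h1, y, hy, rfl⟩
      refine ⟨(ht0 _ _).mpr h1, ?_⟩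
      show t0.1 (g⁻¹ (g y)) = j
      rw [← Equiv.Perm.mul_apply, inv_mul_cancel, Equiv.Perm.one_apply]
      exact (ht0 _ _).mpr hy
    · rintro ⟨h1, h2⟩
      exact ⟨(ht0 _ _).mp h1, ⟨g⁻¹ x, (ht0 _ _).mp h2, by simp⟩⟩
  have hcc : (∀ i j, (lamBlock n ℓ lam i ∩ (lamBlock n ℓ lam j).image g).card =
        (lamBlock n ℓ lam j ∩ (lamBlock n ℓ lam i).image g).card) ↔ CardCond t0.1 (g • t0).1 := by
    unfold CardCond
    constructor <;> intro H i j
    · rw [← hblock i j, ← hblock j i]; exact H i j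
    · rw [hblock i j, hblock j i]; exact H i j
  -- builder: any involution with the key pointwise property gives PairDecomp
  have build : ∀ z : Equiv.Perm (Fin n), z * z = 1 →
      (∀ x, t0.1 (z x) = (g • t0).1 x ∧ (g • t0).1 (z x) = t0.1 x) →
      PairDecomp t0 (g • t0) z := by
    intro z hz key
    have zinv : z⁻¹ = z := by
      rw [inv_eq_iff_mul_eq_one]; exact hz
    have hu : z • t0 = g • t0 := by
      apply Subtype.ext; funext x
      show t0.1 (z⁻¹ x) = (g • t0).1 x
      rw [zinv]; exact (key x).1
    have hv : z • (g • t0) = t0 := by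
      apply Subtype.ext; funext x
      show (g • t0).1 (z⁻¹ x) = t0.1 x
      rw [zinv]; exact (key x).2
    refine ⟨hz, hu, hv, ?_, ?_⟩
    · intro r hr1 hr2
      have hr1' : ∀ y, t0.1 (r⁻¹ y) = t0.1 y := fun y =>
        congrFun (congrArg Subtype.val hr1) y
      have hr2' : ∀ y, (g • t0).1 (r⁻¹ y) = (g • t0).1 y := fun y =>
        congrFun (congrArg Subtype.val hr2) y
      constructor
      · apply Subtype.ext; funext x
        show t0.1 ((z * r * z⁻¹)⁻¹ x) = t0.1 x
        have : (z * r * z⁻¹)⁻¹ x = z (r⁻¹ (z⁻¹ x)) := by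
          simp [mul_inv_rev, Equiv.Perm.mul_apply]
        rw [this, zinv]
        calc t0.1 (z (r⁻¹ (z x))) = (g • t0).1 (r⁻¹ (z x)) := (key _).1
          _ = (g • t0).1 (z x) := hr2' _
          _ = t0.1 x := (key x).2
      · apply Subtype.ext; funext x
        show (g • t0).1 ((z * r * z⁻¹)⁻¹ x) = (g • t0).1 x
        have : (z * r * z⁻¹)⁻¹ x = z (r⁻¹ (z⁻¹ x)) := by
          simp [mul_inv_rev, Equiv.Perm.mul_apply]
        rw [this, zinv]
        calc (g • t0).1 (z (r⁻¹ (z x))) = t0.1 (r⁻¹ (z x)) := (key _).2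
          _ = t0.1 (z x) := hr1' _
          _ = (g • t0).1 x := (key x).1
    · intro h
      constructor
      · rintro (hfix | ⟨h1, h2⟩)
        · exact Or.inl hfix
        · refine Or.inr ⟨h * z, ?_, ?_, ?_⟩
          · rw [mul_smul, hu, h2]
          · rw [mul_smul, hv, h1]
          · rw [mul_assoc, hz, mul_one]
      · rintro (hfix | ⟨r, hr1, hr2, rfl⟩)
        · exact Or.inl hfix
        · refine Or.inr ⟨?_, ?_⟩
          · rw [mul_smul, hu, hr2]
          · rw [mul_smul, hv, hr1]
  constructor
  · constructor
    · rintro ⟨z, hz1, hz2, hz3, -, -⟩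
      apply hcc.mpr
      have key' : ∀ x, t0.1 (z⁻¹ x) = (g • t0).1 x := fun x =>
        congrFun (congrArg Subtype.val hz2) x
      have key'' : ∀ x, (g • t0).1 (z⁻¹ x) = t0.1 x := fun x =>
        congrFun (congrArg Subtype.val hz3) x
      have k1 : ∀ x, (g • t0).1 (z x) = t0.1 x := fun x => by
        have := key' (z x); rw [← Equiv.Perm.mul_apply, inv_mul_cancel, Equiv.Perm.one_apply] at this; exact this.symm
      have k2 : ∀ x, t0.1 (z x) = (g • t0).1 x := fun x => by
        have := key'' (z x); rw [← Equiv.Perm.mul_apply, inv_mul_cancel, Equiv.Perm.one_apply] at this; exact this.symm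
      intro i j
      refine Finset.card_bij' (fun x _ => z⁻¹ x) (fun x _ => z x) ?_ ?_ ?_ ?_
      · intro x hx
        simp only [Finset.mem_filter, Finset.mem_univ, true_and] at hx ⊢
        exact ⟨(key' x).trans hx.2, (key'' x).trans hx.1⟩
      · intro x hx
        simp only [Finset.mem_filter, Finset.mem_univ, true_and] at hx ⊢
        exact ⟨(k2 x).trans hx.2, (k1 x).trans hx.1⟩
      · intro x _; simp
      · intro x _; simp
    · intro H
      obtain ⟨z, hz1, key, -⟩ := core_exists t0.1 (g • t0).1 (hcc.mp H)
      exact ⟨z, build z hz1 key⟩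
  · intro H
    obtain ⟨z, hz1, key, hfix⟩ := core_exists t0.1 (g • t0).1 (hcc.mp H)
    exact ⟨z, build z hz1 key, hfix, key⟩
end
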